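/- arXiv:math/9809185 — 8 statements merged into one kernel-verified Lean document; each statement's English description precedes it below -/
import Mathlib

section
/- Let x ∈ F(2) have normal form x = x_{i₁}^{r₁}⋯x_{iₙ}^{rₙ}·x_{jₘ}^{-sₘ}⋯x_{j₁}^{-s₁}, and define N(x) = max of the numbers i_k + r_k + r_{k+1} + ⋯ + r_n + 1 for k = 1,…,n together with the numbers j_l + s_l + s_{l+1} + ⋯ + s_m + 1 for l = 1,…,m. Then D(x)/4 ≤ N(x) ≤ D(x) + 1, where D(x) = r₁+⋯+rₙ + s₁+⋯+sₘ + iₙ + jₘ. -/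
open scoped BigOperators

/-- Relators of Thompson's group `F(p)`: `x_i⁻¹ x_j x_i x_{j+p-1}⁻¹` for `i < j`. -/
def thompsonRels (p : ℕ) : Set (FreeGroup ℕ) :=
  { rel | ∃ i j : ℕ, i < j ∧
      rel = (FreeGroup.of i)⁻¹ * FreeGroup.of j * FreeGroup.of i *
        (FreeGroup.of (j + p - 1))⁻¹ }

/-- Thompson's group `F(p)`, presented with generators `x_i` (`i : ℕ`) and relations
`x_i⁻¹ · x_j · x_i = x_{j+p-1}` for `i < j`. -/
def FP (p : ℕ) : Type := PresentedGroup (thompsonRels p)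

instance (p : ℕ) : Group (FP p) :=
  inferInstanceAs (Group (PresentedGroup (thompsonRels p)))

/-- The generator `x_i` of `F(p)`. -/
def xg (p : ℕ) (i : ℕ) : FP p := PresentedGroup.of (rels := thompsonRels p) i

/-- Word length of `x : G` with respect to a set `S` of generators: the least length of a
word in elements of `S ∪ S⁻¹` whose product is `x`. -/
noncomputable def wordLength {G : Type*} [Group G] (S : Set G) (x : G) : ℕ :=
  sInf { n : ℕ | ∃ w : List G, w.length = n ∧ (∀ g ∈ w, g ∈ S ∨ g⁻¹ ∈ S) ∧ w.prod = x }

/-- The word length `|x|_p` on `F(p)`, with respect to the generators `x_0, …, x_{p-1}`. -/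
noncomputable def wlen (p : ℕ) (x : FP p) : ℕ :=
  wordLength { g : FP p | ∃ i, i < p ∧ g = xg p i } x

/-- The data of a candidate normal form
`x_{i₁}^{r₁} ⋯ x_{iₙ}^{rₙ} · x_{jₘ}^{-sₘ} ⋯ x_{j₁}^{-s₁}` in `F(p)`. -/
structure NFData (p : ℕ) where
  n : ℕ
  m : ℕ
  i : Fin n → ℕ
  r : Fin n → ℕ
  j : Fin m → ℕ
  s : Fin m → ℕ

namespace NFData

variable {p : ℕ}

/-- The element of `F(p)` represented by the normal form data, namely
`x_{i₁}^{r₁} ⋯ x_{iₙ}^{rₙ} · (x_{j₁}^{s₁} ⋯ x_{jₘ}^{sₘ})⁻¹`. -/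
def elem (d : NFData p) : FP p :=
  (List.ofFn fun k => xg p (d.i k) ^ d.r k).prod *
    ((List.ofFn fun l => xg p (d.j l) ^ d.s l).prod)⁻¹

/-- The generator with index `a` occurs in `d` (with positive or negative exponent). -/
def Occurs (d : NFData p) (a : ℕ) : Prop :=
  (∃ k, d.i k = a) ∨ (∃ l, d.j l = a)

/-- `d` is a normal form of `x ∈ F(p)`: the indices are strictly increasing, the exponents
are at least `1`, `iₙ ≠ jₘ` when both parts are nonempty, whenever a generator and its
inverse both occur one of the following `p-1` generators (or its inverse) occurs as well,
and the corresponding product equals `x`. -/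
def IsNormalFormOf (d : NFData p) (x : FP p) : Prop :=
  StrictMono d.i ∧ StrictMono d.j ∧
    (∀ k, 1 ≤ d.r k) ∧ (∀ l, 1 ≤ d.s l) ∧
    (∀ (hn : 0 < d.n) (hm : 0 < d.m),
      d.i ⟨d.n - 1, Nat.sub_lt hn Nat.one_pos⟩ ≠ d.j ⟨d.m - 1, Nat.sub_lt hm Nat.one_pos⟩) ∧
    (∀ a : ℕ, (∃ k, d.i k = a) → (∃ l, d.j l = a) →
      ∃ b : ℕ, a < b ∧ b ≤ a + p - 1 ∧ d.Occurs b) ∧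
    x = d.elem

/-- The quantity `D(x) = r₁ + ⋯ + rₙ + s₁ + ⋯ + sₘ + iₙ + jₘ` (the terms `iₙ`, `jₘ` being
omitted when `n = 0`, resp. `m = 0`). -/
def D (d : NFData p) : ℕ :=
  (∑ k, d.r k) + (∑ l, d.s l) +
    (if hn : 0 < d.n then d.i ⟨d.n - 1, Nat.sub_lt hn Nat.one_pos⟩ else 0) +
    (if hm : 0 < d.m then d.j ⟨d.m - 1, Nat.sub_lt hm Nat.one_pos⟩ else 0)

end NFData

/-- The tail sum `r_k + r_{k+1} + ⋯ + r_n`. -/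
def tailSum {n : ℕ} (r : Fin n → ℕ) (k : Fin n) : ℕ :=
  ∑ l ∈ Finset.univ.filter (fun l => k ≤ l), r l
/-- `N(x)` associated to a normal form in `F(2)` (Theorem 3):
the maximum of `i_k + r_k + ⋯ + r_n + 1` and `j_l + s_l + ⋯ + s_m + 1`. -/
def NFData.N2 (d : NFData 2) : ℕ :=
  max (Finset.univ.sup fun k => d.i k + tailSum d.r k + 1)
      (Finset.univ.sup fun l => d.j l + tailSum d.s l + 1)

/-- `N(x)` associated to a normal form in `F(p)` (Theorem 6):
the maximum of `⌊i_k/(p-1)⌋ + r_k + ⋯ + r_n + 1` and `⌊j_l/(p-1)⌋ + s_l + ⋯ + s_m + 1`. -/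
def NFData.Ngen {p : ℕ} (d : NFData p) : ℕ :=
  max (Finset.univ.sup fun k => d.i k / (p - 1) + tailSum d.r k + 1)
      (Finset.univ.sup fun l => d.j l / (p - 1) + tailSum d.s l + 1)

/-- `N(x) = max { i_k + r_k + ⋯ + r_n + 1 }` for a positive word (Proposition 2). -/
def posN {n : ℕ} (i r : Fin n → ℕ) : ℕ :=
  Finset.univ.sup fun k => i k + tailSum r k + 1

/-- `N₁(x) = max { ⌊i_k/(p-1)⌋ + r_k + ⋯ + r_n + 1 }` (Proposition 4). -/
def posN1 (p : ℕ) {n : ℕ} (i r : Fin n → ℕ) : ℕ :=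
  Finset.univ.sup fun k => i k / (p - 1) + tailSum r k + 1

/-- `N₂(x) = max { i_k + (p-1)(r_k + ⋯ + r_n) + 1 }` (Proposition 5). -/
def posN2 (p : ℕ) {n : ℕ} (i r : Fin n → ℕ) : ℕ :=
  Finset.univ.sup fun k => i k + (p - 1) * tailSum r k + 1

/-- `x ∈ ℤ[1/p]`. -/
def IsPAdicRational (p : ℕ) (x : ℝ) : Prop :=
  ∃ (a : ℤ) (n : ℕ), x = (a : ℝ) / (p : ℝ) ^ n

/-- Thompson's group `F(p)` realized as a set of permutations of `ℝ`: orientation-preserving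
piecewise-linear homeomorphisms of `[0,1]` (extended by the identity outside `[0,1]`) with
finitely many breakpoints, all in `ℤ[1/p]`, whose slopes are integer powers of `p`. -/
def PLSet (p : ℕ) : Set (Equiv.Perm ℝ) :=
  { f | Monotone f ∧ (∀ t : ℝ, t ≤ 0 → f t = t) ∧ (∀ t : ℝ, 1 ≤ t → f t = t) ∧
    ∃ B : Finset ℝ, (∀ b ∈ B, IsPAdicRational p b) ∧
      ∀ t : ℝ, t ∉ (B : Set ℝ) →
        ∃ ε > (0 : ℝ), ∃ (k : ℤ) (c : ℝ), ∀ s : ℝ, |s - t| < ε → f s = (p : ℝ) ^ k * s + c }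

/-- The map `Φ_p` on homeomorphisms: `(Φ_p f)(t) = t` for `t ≤ 1 - 1/p`, and
`(Φ_p f)(t) = ((p-1) + f(pt - (p-1)))/p` for `t ≥ 1 - 1/p`. -/
noncomputable def PhiMap (p : ℕ) (f : ℝ → ℝ) : ℝ → ℝ := fun t =>
  if t ≤ 1 - 1 / (p : ℝ) then t
  else (((p : ℝ) - 1) + f ((p : ℝ) * t - ((p : ℝ) - 1))) / (p : ℝ)

/-- The piecewise-linear homeomorphism `f_i` of `ℝ` corresponding to the generator `x_i`
of `F(p)`. -/
noncomputable def fgen (p : ℕ) (i : ℕ) : ℝ → ℝ := fun t =>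
  if t ≤ (i : ℝ) then t
  else if t ≤ (i : ℝ) + 1 then (p : ℝ) * t + (i : ℝ) * (1 - (p : ℝ))
  else t + (p : ℝ) - 1
theorem tstkey {n : ℕ} (i r : Fin n → ℕ) (hmono : StrictMono i) :
    (∑ l, r l) + (if h : 0 < n then i ⟨n-1, Nat.sub_lt h Nat.one_pos⟩ else 0)
      ≤ 2 * (Finset.univ.sup fun k => i k + tailSum r k + 1) := by
  rcases Nat.eq_zero_or_pos n with h0 | h
  · subst h0; simp
  · rw [dif_pos h]
    have h1 : i ⟨0,h⟩ + tailSum r ⟨0,h⟩ + 1 ≤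
        Finset.univ.sup fun k => i k + tailSum r k + 1 :=
      Finset.le_sup (f := fun k => i k + tailSum r k + 1) (Finset.mem_univ _)
    have h2 : i ⟨n-1, Nat.sub_lt h Nat.one_pos⟩ + tailSum r ⟨n-1, Nat.sub_lt h Nat.one_pos⟩ + 1 ≤
        Finset.univ.sup fun k => i k + tailSum r k + 1 :=
      Finset.le_sup (f := fun k => i k + tailSum r k + 1) (Finset.mem_univ _)
    have h3 : tailSum r ⟨0,h⟩ = ∑ l, r l := by
      unfold tailSum
      rw [Finset.filter_true_of_mem]
      intro l _
      simp [Fin.le_def]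
    omega

theorem tstkeyU {n : ℕ} (i r : Fin n → ℕ) (hmono : StrictMono i) :
    (Finset.univ.sup fun k => i k + tailSum r k + 1) ≤
      (∑ l, r l) + (if h : 0 < n then i ⟨n-1, Nat.sub_lt h Nat.one_pos⟩ else 0) + 1 := by
  apply Finset.sup_le
  intro k _
  have hn : 0 < n := k.pos
  rw [dif_pos hn]
  have h1 : i k ≤ i ⟨n-1, Nat.sub_lt hn Nat.one_pos⟩ := by
    apply hmono.monotone
    simp [Fin.le_def]
    omega
  have h2 : tailSum r k ≤ ∑ l, r l :=
    Finset.sum_le_sum_of_subset (Finset.filter_subset _ _)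
  omega


/-- Theorem 3, metric estimate. If `x ∈ F(2)` has normal form
`x_{i₁}^{r₁} ⋯ x_{iₙ}^{rₙ} · x_{jₘ}^{-sₘ} ⋯ x_{j₁}^{-s₁}` and
`N(x) = max { i_k + r_k + ⋯ + r_n + 1, j_l + s_l + ⋯ + s_m + 1 }`, then
`D(x)/4 ≤ N(x) ≤ D(x) + 1`. -/
theorem statement1 (x : FP 2) (d : NFData 2) (hd : d.IsNormalFormOf x) :
    (d.D : ℝ) / 4 ≤ (d.N2 : ℝ) ∧ (d.N2 : ℝ) ≤ (d.D : ℝ) + 1 := by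
  obtain ⟨hi, hj, hr, hs, -, -, -⟩ := hd
  have hlow : d.D ≤ 4 * d.N2 := by
    have h1 := tstkey d.i d.r hi
    have h2 := tstkey d.j d.s hj
    have h3 : (Finset.univ.sup fun k => d.i k + tailSum d.r k + 1) ≤ d.N2 := le_max_left _ _
    have h4 : (Finset.univ.sup fun l => d.j l + tailSum d.s l + 1) ≤ d.N2 := le_max_right _ _
    unfold NFData.D
    omega
  have hup : d.N2 ≤ d.D + 1 := by
    have h1 := tstkeyU d.i d.r hi
    have h2 := tstkeyU d.j d.s hj
    unfold NFData.N2 NFData.D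
    apply max_le <;> omega
  constructor
  · rw [div_le_iff₀ (by norm_num)]
    calc (d.D : ℝ) ≤ (4 * d.N2 : ℕ) := by exact_mod_cast Nat.cast_le.mpr hlow
    _ = d.N2 * 4 := by push_cast; ring
  · calc (d.N2 : ℝ) ≤ ((d.D + 1 : ℕ) : ℝ) := Nat.cast_le.mpr hup
    _ = d.D + 1 := by push_cast; ring
end

section
/- Let p ≥ 2 and let x ∈ F(p) have normal form x = x_{i₁}^{r₁}⋯x_{iₙ}^{rₙ}·x_{jₘ}^{-sₘ}⋯x_{j₁}^{-s₁}, and define N(x) = max of the numbers ⌊i_k/(p−1)⌋ + r_k + r_{k+1} + ⋯ + r_n + 1 for k = 1,…,n together with the numbers ⌊j_l/(p−1)⌋ + s_l + s_{l+1} + ⋯ + s_m + 1 for l = 1,…,m. Then D(x)/(4(p−1)) ≤ N(x) ≤ D(x) + 1, where D(x) = r₁+⋯+rₙ + s₁+⋯+sₘ + iₙ + jₘ. -/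
open scoped BigOperators

/-- Theorem 6, metric estimate. If `x ∈ F(p)` has normal form
`x_{i₁}^{r₁} ⋯ x_{iₙ}^{rₙ} · x_{jₘ}^{-sₘ} ⋯ x_{j₁}^{-s₁}` and
`N(x) = max { ⌊i_k/(p-1)⌋ + r_k + ⋯ + r_n + 1, ⌊j_l/(p-1)⌋ + s_l + ⋯ + s_m + 1 }`, then
`D(x)/(4(p-1)) ≤ N(x) ≤ D(x) + 1`. -/
theorem statement2 (p : ℕ) (hp : 2 ≤ p) (x : FP p) (d : NFData p)
    (hd : d.IsNormalFormOf x) :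
    (d.D : ℝ) / (4 * ((p : ℝ) - 1)) ≤ (d.Ngen : ℝ) ∧ (d.Ngen : ℝ) ≤ (d.D : ℝ) + 1 := by

  obtain ⟨hi, hj, hr, hs, -, -, -⟩ := hd
  have hp1 : 0 < p - 1 := by omega
  set N := d.Ngen with hN
  have hterm_i : ∀ k : Fin d.n, d.i k / (p-1) + tailSum d.r k + 1 ≤ N := by
    intro k
    rw [hN]
    unfold NFData.Ngen
    exact le_trans
      (Finset.le_sup (f := fun k => d.i k / (p-1) + tailSum d.r k + 1) (Finset.mem_univ k))
      (le_max_left _ _)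
  have hterm_j : ∀ l : Fin d.m, d.j l / (p-1) + tailSum d.s l + 1 ≤ N := by
    intro l
    rw [hN]
    unfold NFData.Ngen
    exact le_trans
      (Finset.le_sup (f := fun l => d.j l / (p-1) + tailSum d.s l + 1) (Finset.mem_univ l))
      (le_max_right _ _)
  have htail0 : ∀ (n : ℕ) (r : Fin n → ℕ) (h : 0 < n), tailSum r ⟨0, h⟩ = ∑ k, r k := by
    intro n r h
    unfold tailSum
    congr 1
    refine Finset.filter_true_of_mem fun l _ => ?_
    exact Fin.mk_le_of_le_val (Nat.zero_le _)
  have hr_sum : (∑ k, d.r k) ≤ N := by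
    rcases Nat.eq_zero_or_pos d.n with h | h
    · haveI : IsEmpty (Fin d.n) := ⟨fun k => absurd k.isLt (by omega)⟩
      simp
    · have := hterm_i ⟨0, h⟩
      rw [htail0 _ _ h] at this
      exact le_trans (Nat.le_add_left _ _) (le_trans (Nat.le_succ _) this)
  have hs_sum : (∑ l, d.s l) ≤ N := by
    rcases Nat.eq_zero_or_pos d.m with h | h
    · haveI : IsEmpty (Fin d.m) := ⟨fun k => absurd k.isLt (by omega)⟩
      simp
    · have := hterm_j ⟨0, h⟩
      rw [htail0 _ _ h] at this
      exact le_trans (Nat.le_add_left _ _) (le_trans (Nat.le_succ _) this)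
  have hlast : ∀ (n : ℕ) (f : Fin n → ℕ), (∀ k : Fin n, f k / (p-1) + 1 ≤ N) →
      (if hn : 0 < n then f ⟨n - 1, Nat.sub_lt hn Nat.one_pos⟩ else 0) ≤ (p-1) * N := by
    intro n f hf
    split_ifs with h
    · set k : Fin n := ⟨n - 1, Nat.sub_lt h Nat.one_pos⟩
      have h1 := hf k
      have h2 : f k < (p-1) * (f k / (p-1) + 1) := Nat.lt_mul_div_succ _ hp1
      calc f k ≤ (p-1) * (f k / (p-1) + 1) := h2.le
        _ ≤ (p-1) * N := Nat.mul_le_mul_left _ h1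
    · exact Nat.zero_le _
  have hi_last := hlast d.n d.i (fun k => by have := hterm_i k; omega)
  have hj_last := hlast d.m d.j (fun l => by have := hterm_j l; omega)
  have hM : N ≤ (p-1) * N := Nat.le_mul_of_pos_left _ hp1
  have hDN : d.D ≤ 4 * (p-1) * N := by
    unfold NFData.D
    have h4 : 4 * (p-1) * N = (p-1)*N + (p-1)*N + (p-1)*N + (p-1)*N := by ring
    calc (∑ k, d.r k) + (∑ l, d.s l)
          + (if hn : 0 < d.n then d.i ⟨d.n - 1, Nat.sub_lt hn Nat.one_pos⟩ else 0)
          + (if hm : 0 < d.m then d.j ⟨d.m - 1, Nat.sub_lt hm Nat.one_pos⟩ else 0)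
        ≤ (p-1)*N + (p-1)*N + (p-1)*N + (p-1)*N :=
          add_le_add (add_le_add (add_le_add (hr_sum.trans hM) (hs_sum.trans hM))
            hi_last) hj_last
      _ = 4 * (p-1) * N := h4.symm
  have hND : N ≤ d.D + 1 := by
    rw [hN]
    unfold NFData.Ngen
    apply max_le
    · apply Finset.sup_le
      intro k _
      have hn : 0 < d.n := k.pos
      have hk : d.i k ≤ d.i ⟨d.n - 1, Nat.sub_lt hn Nat.one_pos⟩ := by
        apply hi.monotone
        rw [Fin.le_def]
        have := k.isLt
        simp only [Fin.val_mk]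
        omega
      have h1 : d.i k / (p-1) ≤ d.i k := Nat.div_le_self _ _
      have h2 : tailSum d.r k ≤ ∑ a, d.r a :=
        Finset.sum_le_sum_of_subset (Finset.filter_subset _ _)
      have hDe : (∑ a, d.r a) + d.i ⟨d.n - 1, Nat.sub_lt hn Nat.one_pos⟩ ≤ d.D := by
        unfold NFData.D
        rw [dif_pos hn]
        split_ifs <;> omega
      linarith [h1, h2, hk, hDe]
    · apply Finset.sup_le
      intro l _
      have hm : 0 < d.m := l.pos
      have hl : d.j l ≤ d.j ⟨d.m - 1, Nat.sub_lt hm Nat.one_pos⟩ := by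
        apply hj.monotone
        rw [Fin.le_def]
        have := l.isLt
        simp only [Fin.val_mk]
        omega
      have h1 : d.j l / (p-1) ≤ d.j l := Nat.div_le_self _ _
      have h2 : tailSum d.s l ≤ ∑ a, d.s a :=
        Finset.sum_le_sum_of_subset (Finset.filter_subset _ _)
      have hDe : (∑ a, d.s a) + d.j ⟨d.m - 1, Nat.sub_lt hm Nat.one_pos⟩ ≤ d.D := by
        unfold NFData.D
        rw [dif_pos hm]
        split_ifs <;> omega
      linarith [h1, h2, hl, hDe]
  constructor
  · have hpos : (0:ℝ) < 4 * ((p:ℝ) - 1) := by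
      have : (2:ℝ) ≤ (p:ℝ) := by exact_mod_cast hp
      linarith
    rw [div_le_iff₀ hpos]
    have hcast : (d.D : ℝ) ≤ 4 * ((p:ℝ) - 1) * (N : ℝ) := by
      have := hDN
      have h1 : ((4 * (p-1) * N : ℕ) : ℝ) = 4 * ((p:ℝ) - 1) * (N : ℝ) := by
        push_cast [Nat.cast_sub (show 1 ≤ p by omega)]
        ring
      calc (d.D : ℝ) ≤ ((4 * (p-1) * N : ℕ) : ℝ) := by exact_mod_cast this
        _ = _ := h1
    calc (d.D : ℝ) ≤ 4 * ((p:ℝ) - 1) * (N : ℝ) := hcast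
      _ = (N : ℝ) * (4 * ((p:ℝ) - 1)) := by ring
  · exact_mod_cast hND
end

section
/- Let x ∈ F(2) be represented by a positive normal form x = x_{i₁}^{r₁}⋯x_{iₙ}^{rₙ} with n ≥ 1, set N(x) = max{ i_k + r_k + r_{k+1} + ⋯ + r_n + 1 : k = 1,…,n }, and let f = ρ(x) be the corresponding piecewise-linear homeomorphism of ℝ. Then N(x) equals the y-coordinate of the last breakpoint of the graph of f; that is, if b = inf{ s ∈ ℝ : f is affine on [s,∞) }, then f(b) = N(x). -/
open scoped BigOperators

namespace S8aux

lemma fgen_le (j : ℕ) (t : ℝ) : fgen 2 j t ≤ t + 1 := by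
  unfold fgen; push_cast; split_ifs <;> linarith

lemma fgen_lt (j : ℕ) (t : ℝ) (h : t < (j : ℝ) + 1) : fgen 2 j t < t + 1 := by
  unfold fgen; push_cast; split_ifs <;> linarith

lemma fgen_eq (j : ℕ) (t : ℝ) (h : (j : ℝ) + 1 ≤ t) : fgen 2 j t = t + 1 := by
  unfold fgen; push_cast; split_ifs <;> linarith

noncomputable def gpow (a : ℕ) : ℕ → ℝ → ℝ
  | 0, t => t
  | (r+1), t => gpow a r (fgen 2 a t)

lemma gpow_le (a r : ℕ) : ∀ t : ℝ, gpow a r t ≤ t + r := by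
  induction r with
  | zero => intro t; simp [gpow]
  | succ r ih =>
    intro t
    have h1 := fgen_le a t
    have h2 := ih (fgen 2 a t)
    push_cast
    calc gpow a (r+1) t = gpow a r (fgen 2 a t) := rfl
      _ ≤ fgen 2 a t + r := h2
      _ ≤ t + 1 + r := by linarith
      _ = t + (r + 1) := by ring

lemma gpow_eq (a r : ℕ) : ∀ t : ℝ, (a : ℝ) + 1 ≤ t → gpow a r t = t + r := by
  induction r with
  | zero => intro t _; simp [gpow]
  | succ r ih =>
    intro t ht
    have h1 := fgen_eq a t ht
    have h2 := ih (fgen 2 a t) (by rw [h1]; linarith)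
    push_cast
    calc gpow a (r+1) t = gpow a r (fgen 2 a t) := rfl
      _ = fgen 2 a t + r := h2
      _ = t + (r + 1) := by rw [h1]; ring

lemma gpow_lt (a r : ℕ) (hr : 1 ≤ r) (t : ℝ) (ht : t < (a : ℝ) + 1) :
    gpow a r t < t + r := by
  obtain ⟨r', rfl⟩ : ∃ r', r = r' + 1 := ⟨r - 1, by omega⟩
  have h1 := fgen_lt a t ht
  have h2 := gpow_le a r' (fgen 2 a t)
  push_cast
  calc gpow a (r'+1) t = gpow a r' (fgen 2 a t) := rfl
    _ ≤ fgen 2 a t + r' := h2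
    _ < t + 1 + r' := by linarith
    _ = t + (r' + 1) := by ring

def sumR (l : List (ℕ × ℕ)) : ℕ := (l.map Prod.snd).sum

noncomputable def Fb : List (ℕ × ℕ) → ℝ → ℝ
  | [], t => t
  | (p :: l), t => Fb l (gpow p.1 p.2 t)

def Nl : List (ℕ × ℕ) → ℕ
  | [] => 0
  | (p :: l) => max (p.1 + p.2 + sumR l + 1) (Nl l)

lemma sumR_cons (p : ℕ × ℕ) (l : List (ℕ × ℕ)) : sumR (p :: l) = p.2 + sumR l := by
  simp [sumR]

lemma Fb_le : ∀ (l : List (ℕ × ℕ)) (t : ℝ), Fb l t ≤ t + sumR l := by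
  intro l
  induction l with
  | nil => intro t; simp [Fb, sumR]
  | cons p l ih =>
    intro t
    have h1 := gpow_le p.1 p.2 t
    have h2 := ih (gpow p.1 p.2 t)
    rw [sumR_cons]
    push_cast
    calc Fb (p :: l) t = Fb l (gpow p.1 p.2 t) := rfl
      _ ≤ gpow p.1 p.2 t + sumR l := h2
      _ ≤ t + p.2 + sumR l := by linarith
      _ = t + (p.2 + sumR l) := by ring

lemma Fb_eq : ∀ (l : List (ℕ × ℕ)) (t : ℝ), (Nl l : ℝ) - sumR l ≤ t →
    Fb l t = t + sumR l := by
  intro l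
  induction l with
  | nil => intro t _; simp [Fb, sumR]
  | cons p l ih =>
    intro t ht
    have hle : (p.1 + p.2 + sumR l + 1 : ℕ) ≤ Nl (p :: l) := le_max_left _ _
    have hle2 : Nl l ≤ Nl (p :: l) := le_max_right _ _
    have hle' : ((p.1 + p.2 + sumR l + 1 : ℕ) : ℝ) ≤ (Nl (p :: l) : ℝ) := by
      exact_mod_cast hle
    have hle2' : ((Nl l : ℕ) : ℝ) ≤ (Nl (p :: l) : ℝ) := by exact_mod_cast hle2
    rw [sumR_cons] at ht ⊢
    push_cast at ht hle' ⊢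
    have ha : (p.1 : ℝ) + 1 ≤ t := by linarith
    have h1 := gpow_eq p.1 p.2 t ha
    have h2 := ih (gpow p.1 p.2 t) (by rw [h1]; linarith)
    calc Fb (p :: l) t = Fb l (gpow p.1 p.2 t) := rfl
      _ = gpow p.1 p.2 t + sumR l := h2
      _ = t + (p.2 + sumR l) := by rw [h1]; ring

lemma Fb_lt : ∀ (l : List (ℕ × ℕ)), (∀ q ∈ l, 1 ≤ q.2) → ∀ (t : ℝ), l ≠ [] →
    t < (Nl l : ℝ) - sumR l → Fb l t < t + sumR l := by
  intro l
  induction l with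
  | nil => intro _ t h; exact absurd rfl h
  | cons p l ih =>
    intro hs t _ ht
    have hp : 1 ≤ p.2 := hs p (by simp)
    rw [sumR_cons] at ht ⊢
    push_cast at ht ⊢
    by_cases hc : t < (p.1 : ℝ) + 1
    · have h1 := gpow_lt p.1 p.2 hp t hc
      have h2 := Fb_le l (gpow p.1 p.2 t)
      calc Fb (p :: l) t = Fb l (gpow p.1 p.2 t) := rfl
        _ ≤ gpow p.1 p.2 t + sumR l := h2
        _ < t + (p.2 + sumR l) := by linarith
    · push_neg at hc
      have h1 := gpow_eq p.1 p.2 t hc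
      -- Nl (p::l) must equal Nl l
      have hmax : Nl (p :: l) = max (p.1 + p.2 + sumR l + 1) (Nl l) := rfl
      have hgt : (p.1 + p.2 + sumR l + 1 : ℕ) < Nl (p :: l) := by
        by_contra hcon
        push_neg at hcon
        have : ((Nl (p :: l) : ℕ) : ℝ) ≤ ((p.1 + p.2 + sumR l + 1 : ℕ) : ℝ) := by
          exact_mod_cast hcon
        push_cast at this
        linarith
      have hNl : Nl (p :: l) = Nl l := by
        rcases max_cases (p.1 + p.2 + sumR l + 1) (Nl l) with ⟨h, _⟩ | ⟨h, _⟩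
        · rw [hmax, h] at hgt; omega
        · rw [hmax, h]
      have hne : l ≠ [] := by
        intro hnil
        subst hnil
        simp [Nl, sumR] at hNl
      have h2 := ih (fun q hq => hs q (by simp [hq])) (gpow p.1 p.2 t) hne
        (by rw [h1, ← hNl]; push_cast; linarith)
      calc Fb (p :: l) t = Fb l (gpow p.1 p.2 t) := rfl
        _ < gpow p.1 p.2 t + sumR l := h2
        _ = t + (p.2 + sumR l) := by rw [h1]; ring

end S8aux

namespace S8aux

lemma tailSum_zero {n : ℕ} (r : Fin (n+1) → ℕ) : tailSum r 0 = ∑ k, r k := by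
  unfold tailSum
  rw [Finset.filter_true_of_mem (fun x _ => Fin.zero_le x)]

lemma tailSum_succ {n : ℕ} (r : Fin (n+1) → ℕ) (k : Fin n) :
    tailSum r k.succ = tailSum (r ∘ Fin.succ) k := by
  unfold tailSum
  rw [Finset.sum_filter, Finset.sum_filter, Fin.sum_univ_succ]
  have h0 : ¬ (k.succ ≤ (0 : Fin (n+1))) := by
    simp [Fin.le_zero_iff, Fin.succ_ne_zero]
  rw [if_neg h0]
  simp [Fin.succ_le_succ_iff]

lemma sup_univ_succ {n : ℕ} (g : Fin (n+1) → ℕ) :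
    Finset.univ.sup g = max (g 0) (Finset.univ.sup (g ∘ Fin.succ)) := by
  rw [Fin.univ_succ, Finset.sup_cons, Finset.sup_map]
  rfl

lemma sumR_ofFn {n : ℕ} (i r : Fin n → ℕ) :
    sumR (List.ofFn fun k => (i k, r k)) = ∑ k, r k := by
  simp only [sumR, List.map_ofFn]
  rw [List.sum_ofFn]
  rfl

lemma Nl_ofFn : ∀ (n : ℕ) (i r : Fin n → ℕ),
    Nl (List.ofFn fun k => (i k, r k)) = posN i r := by
  intro n
  induction n with
  | zero => intro i r; simp [Nl, posN]
  | succ n ih =>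
    intro i r
    rw [List.ofFn_succ]
    show max (i 0 + r 0 + sumR (List.ofFn fun k => (i k.succ, r k.succ)) + 1)
        (Nl (List.ofFn fun k => (i k.succ, r k.succ))) = posN i r
    rw [ih (fun k => i k.succ) (fun k => r k.succ), sumR_ofFn]
    unfold posN
    rw [sup_univ_succ (fun k => i k + tailSum r k + 1)]
    congr 1
    · rw [tailSum_zero, Fin.sum_univ_succ]; ring
    · congr 1
      funext k
      show i k.succ + tailSum (fun k => r k.succ) k + 1 = i k.succ + tailSum r k.succ + 1
      rw [tailSum_succ]
      rfl

end S8aux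

namespace S8aux

section rho
variable (ρ : FP 2 → ℝ → ℝ)
  (hρmul : ∀ a b : FP 2, ρ (a * b) = ρ b ∘ ρ a)
  (hρgen : ∀ j : ℕ, ρ (xg 2 j) = fgen 2 j)

include hρmul hρgen

lemma rho_pow : ∀ (r : ℕ), 1 ≤ r → ∀ (a : ℕ) (t : ℝ), ρ (xg 2 a ^ r) t = gpow a r t := by
  intro r
  induction r with
  | zero => omega
  | succ r ih =>
    intro _ a t
    rcases Nat.eq_zero_or_pos r with hr | hr
    · subst hr
      rw [pow_one, hρgen]
      show fgen 2 a t = gpow a 1 t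
      rfl
    · rw [pow_succ', hρmul]
      show ρ (xg 2 a ^ r) (ρ (xg 2 a) t) = gpow a (r + 1) t
      rw [hρgen, ih hr a (fgen 2 a t)]
      rfl

lemma rho_prod : ∀ (l : List (ℕ × ℕ)) (p : ℕ × ℕ), 1 ≤ p.2 → (∀ q ∈ l, 1 ≤ q.2) →
    ∀ t : ℝ, ρ (((p :: l).map (fun q => xg 2 q.1 ^ q.2)).prod) t = Fb (p :: l) t := by
  intro l
  induction l with
  | nil =>
    intro p hp _ t
    rw [List.map_cons, List.map_nil, List.prod_cons, List.prod_nil, mul_one]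
    rw [rho_pow ρ hρmul hρgen p.2 hp p.1 t]
    rfl
  | cons q l ih =>
    intro p hp hq t
    rw [List.map_cons, List.prod_cons, hρmul]
    show ρ ((List.map (fun q => xg 2 q.1 ^ q.2) (q :: l)).prod) (ρ (xg 2 p.1 ^ p.2) t)
      = Fb (p :: q :: l) t
    rw [rho_pow ρ hρmul hρgen p.2 hp p.1 t,
      ih q (hq q (by simp)) (fun x hx => hq x (by simp [hx])) (gpow p.1 p.2 t)]
    rfl

end rho

end S8aux

/-- Proposition 2, last breakpoint. If `x ∈ F(2)` has positive normal
form `x_{i₁}^{r₁} ⋯ x_{iₙ}^{rₙ}` and `f = ρ(x)` is the corresponding piecewise-linear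
homeomorphism of `ℝ`, then `N(x) = max { i_k + r_k + ⋯ + r_n + 1 }` is the `y`-coordinate
of the last breakpoint of the graph of `f`: if `b = inf { s | f is affine on [s,∞) }`,
then `f(b) = N(x)`. -/
theorem statement8 (n : ℕ) (hn : 1 ≤ n) (i r : Fin n → ℕ)
    (hi : StrictMono i) (hr : ∀ k, 1 ≤ r k) (x : FP 2)
    (hx : x = (List.ofFn fun k => xg 2 (i k) ^ r k).prod)
    (ρ : FP 2 → ℝ → ℝ)
    (hρmul : ∀ a b : FP 2, ρ (a * b) = ρ b ∘ ρ a)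
    (hρgen : ∀ j : ℕ, ρ (xg 2 j) = fgen 2 j)
    (f : ℝ → ℝ) (hf : f = ρ x)
    (b : ℝ) (hb : b = sInf { s : ℝ | ∃ a c : ℝ, ∀ t : ℝ, s ≤ t → f t = a * t + c }) :
    f b = (posN i r : ℝ) := by
  classical
  obtain ⟨m, rfl⟩ : ∃ m, n = m + 1 := ⟨n - 1, by omega⟩
  set l : List (ℕ × ℕ) := List.ofFn (fun k => (i k, r k)) with hl
  set R : ℕ := ∑ k, r k with hR
  set N : ℕ := posN i r with hN
  have hsum : S8aux.sumR l = R := S8aux.sumR_ofFn i r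
  have hNl : S8aux.Nl l = N := S8aux.Nl_ofFn (m+1) i r
  -- f = Fb l
  have hfF : ∀ t, f t = S8aux.Fb l t := by
    intro t
    have hmap : (List.ofFn fun k => xg 2 (i k) ^ r k)
        = l.map (fun q => xg 2 q.1 ^ q.2) := by
      rw [hl, List.map_ofFn]; rfl
    have hlc : l = (i 0, r 0) :: List.ofFn (fun k : Fin m => (i k.succ, r k.succ)) := by
      rw [hl, List.ofFn_succ]
    rw [hf, hx, hmap, hlc]
    rw [S8aux.rho_prod ρ hρmul hρgen _ _ (hr 0)
      (by intro q hq
          simp only [List.mem_ofFn] at hq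
          obtain ⟨k, rfl⟩ := hq
          exact hr k.succ) t]
  have hA : ∀ t : ℝ, (N : ℝ) - R ≤ t → f t = t + R := by
    intro t ht
    rw [hfF]
    have := S8aux.Fb_eq l t (by rw [hNl, hsum]; exact ht)
    rw [hsum] at this
    exact this
  have hB : ∀ t : ℝ, t < (N : ℝ) - R → f t < t + R := by
    intro t ht
    rw [hfF]
    have hne : l ≠ [] := by
      rw [hl, List.ofFn_succ]; exact List.cons_ne_nil _ _
    have := S8aux.Fb_lt l
      (by intro q hq
          rw [hl] at hq
          simp only [List.mem_ofFn] at hq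
          obtain ⟨k, rfl⟩ := hq
          exact hr k) t hne (by rw [hNl, hsum]; exact ht)
    rw [hsum] at this
    exact this
  have hleast : IsLeast { s : ℝ | ∃ a c : ℝ, ∀ t : ℝ, s ≤ t → f t = a * t + c }
      ((N : ℝ) - R) := by
    constructor
    · exact ⟨1, R, fun t ht => by rw [hA t ht]; ring⟩
    · intro s hs
      by_contra hcon
      push_neg at hcon
      obtain ⟨a, c, hac⟩ := hs
      set t₁ : ℝ := max s ((N : ℝ) - R) with ht₁
      have h1 : f t₁ = t₁ + R := hA _ (le_max_right _ _)
      have h1' : f t₁ = a * t₁ + c := hac _ (le_max_left _ _)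
      have h2 : f (t₁ + 1) = (t₁ + 1) + R := hA _ (by
        have := le_max_right s ((N : ℝ) - R); linarith)
      have h2' : f (t₁ + 1) = a * (t₁ + 1) + c := hac _ (by
        have := le_max_left s ((N : ℝ) - R); linarith)
      have hexp : a * (t₁ + 1) = a * t₁ + a := by ring
      have ha : a = 1 := by rw [hexp] at h2'; linarith
      have hc : c = (R : ℝ) := by rw [ha] at h1'; linarith
      set t₃ : ℝ := max s ((N : ℝ) - R - 1) with ht₃
      have h3 : t₃ < (N : ℝ) - R := max_lt hcon (by linarith)
      have h3' : f t₃ = a * t₃ + c := hac _ (le_max_left _ _)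
      have h3'' : f t₃ < t₃ + R := hB _ h3
      rw [ha, hc] at h3'
      linarith
  rw [hb, hleast.csInf_eq, hA _ le_rfl]
  ring
end

section
/- Let p ≥ 2 and let x ∈ F(p) be represented by a positive normal form x = x_{i₁}^{r₁}⋯x_{iₙ}^{rₙ} with n ≥ 1, and set N₁(x) = max{ ⌊i_k/(p−1)⌋ + r_k + r_{k+1} + ⋯ + r_n + 1 : k = 1,…,n } and D(x) = r₁+⋯+rₙ + iₙ. Then D(x)/(2(p−1)) ≤ N₁(x) ≤ D(x) + 1. -/
open scoped BigOperators

/-- Proposition 4, metric estimate. If `x ∈ F(p)` has positive normal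
form `x_{i₁}^{r₁} ⋯ x_{iₙ}^{rₙ}`, `N₁(x) = max { ⌊i_k/(p-1)⌋ + r_k + ⋯ + r_n + 1 }` and
`D(x) = r₁ + ⋯ + rₙ + iₙ`, then `D(x)/(2(p-1)) ≤ N₁(x) ≤ D(x) + 1`. -/
theorem statement9 (p : ℕ) (hp : 2 ≤ p) (n : ℕ) (hn : 1 ≤ n) (i r : Fin n → ℕ)
    (hi : StrictMono i) (hr : ∀ k, 1 ≤ r k) (x : FP p)
    (hx : x = (List.ofFn fun k => xg p (i k) ^ r k).prod) :
    ((((∑ k, r k) + i ⟨n - 1, Nat.sub_lt hn Nat.one_pos⟩ : ℕ) : ℝ)) / (2 * ((p : ℝ) - 1)) ≤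
        (posN1 p i r : ℝ) ∧
      (posN1 p i r : ℝ) ≤
        (((∑ k, r k) + i ⟨n - 1, Nat.sub_lt hn Nat.one_pos⟩ : ℕ) : ℝ) + 1 := by

  have hp1 : 0 < p - 1 := by omega
  set S := ∑ k, r k with hS
  set I := i ⟨n - 1, Nat.sub_lt hn Nat.one_pos⟩ with hI
  have hlast : ∀ k : Fin n, i k ≤ I := by
    intro k
    exact hi.monotone (by
      show k ≤ ⟨n - 1, Nat.sub_lt hn Nat.one_pos⟩
      exact Fin.mk_le_mk.mpr (by omega) |>.trans_eq rfl)
  have htail : ∀ k : Fin n, tailSum r k ≤ S := by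
    intro k
    exact Finset.sum_le_sum_of_subset (Finset.filter_subset _ _)
  -- upper bound in ℕ
  have hub : posN1 p i r ≤ S + I + 1 := by
    apply Finset.sup_le
    intro k _
    have h1 : i k / (p - 1) ≤ i k := Nat.div_le_self _ _
    have := hlast k
    have := htail k
    omega
  -- lower bounds in ℕ
  have h0 : S + 1 ≤ posN1 p i r := by
    have hn0 : 0 < n := hn
    set k0 : Fin n := ⟨0, hn0⟩ with hk0
    have hle : i k0 / (p - 1) + tailSum r k0 + 1 ≤ posN1 p i r :=
      Finset.le_sup (f := fun k => i k / (p - 1) + tailSum r k + 1)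
        (Finset.mem_univ k0)
    have heq : tailSum r k0 = S := by
      unfold tailSum
      rw [hS]
      congr 1
      apply Finset.filter_true_of_mem
      intro l _
      exact Fin.mk_le_mk.mpr (Nat.zero_le _) |>.trans_eq rfl
    have hle' : tailSum r k0 + 1 ≤ posN1 p i r :=
      le_trans (Nat.add_le_add_right (Nat.le_add_left _ _) 1) hle
    omega
  have hlastmem : I / (p - 1) + tailSum r ⟨n - 1, Nat.sub_lt hn Nat.one_pos⟩ + 1
      ≤ posN1 p i r := Finset.le_sup (f := fun k => i k / (p - 1) + tailSum r k + 1)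
        (Finset.mem_univ (⟨n - 1, Nat.sub_lt hn Nat.one_pos⟩ : Fin n))
  have hrlast : 1 ≤ tailSum r ⟨n - 1, Nat.sub_lt hn Nat.one_pos⟩ := by
    calc 1 ≤ r ⟨n - 1, Nat.sub_lt hn Nat.one_pos⟩ := hr _
    _ ≤ _ := Finset.single_le_sum (f := r) (fun _ _ => Nat.zero_le _)
        (Finset.mem_filter.mpr ⟨Finset.mem_univ _, le_refl _⟩)
  have h1 : I / (p - 1) + 2 ≤ posN1 p i r := by omega
  have hIdiv : I < (I / (p - 1) + 1) * (p - 1) := by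
    have h := Nat.div_add_mod I (p - 1)
    have h2 := Nat.mod_lt I hp1
    nlinarith
  -- combined nat lower bound: S + I ≤ 2 * (p-1) * N
  have hlb : S + I ≤ 2 * (p - 1) * posN1 p i r := by
    set N := posN1 p i r with hN
    have e1 : (p - 1) * (S + 1) ≤ (p - 1) * N := Nat.mul_le_mul_left _ h0
    have e2 : (p - 1) * (I / (p - 1) + 2) ≤ (p - 1) * N := Nat.mul_le_mul_left _ h1
    have e3 : S + 1 ≤ (p - 1) * (S + 1) := Nat.le_mul_of_pos_left _ hp1
    nlinarith [hIdiv]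
  constructor
  · have hpr : (2:ℝ) ≤ (p:ℝ) := by exact_mod_cast hp
    rw [div_le_iff₀ (by linarith : (0:ℝ) < 2 * ((p:ℝ) - 1))]
    have hc : ((p:ℝ) - 1) = ((p - 1 : ℕ) : ℝ) := by
      push_cast [Nat.cast_sub (by omega : 1 ≤ p)]; ring
    rw [hc]
    calc ((S + I : ℕ) : ℝ) ≤ ((2 * (p - 1) * posN1 p i r : ℕ) : ℝ) := by exact_mod_cast hlb
    _ = (posN1 p i r : ℝ) * (2 * ((p - 1 : ℕ) : ℝ)) := by push_cast; ring
  · exact_mod_cast hub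
end

section
/- Let p ≥ 2 and let x ∈ F(p) be represented by a positive normal form x = x_{i₁}^{r₁}⋯x_{iₙ}^{rₙ} with n ≥ 1, and set N₂(x) = max{ i_k + (p−1)(r_k + r_{k+1} + ⋯ + r_n) + 1 : k = 1,…,n } and D(x) = r₁+⋯+rₙ + iₙ. Then D(x)/2 ≤ N₂(x) ≤ (p−1)·D(x) + 1. -/
open scoped BigOperators

/-- Proposition 5, metric estimate. If `x ∈ F(p)` has positive normal
form `x_{i₁}^{r₁} ⋯ x_{iₙ}^{rₙ}`, `N₂(x) = max { i_k + (p-1)(r_k + ⋯ + r_n) + 1 }` and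
`D(x) = r₁ + ⋯ + rₙ + iₙ`, then `D(x)/2 ≤ N₂(x) ≤ (p-1)·D(x) + 1`. -/
theorem statement10 (p : ℕ) (hp : 2 ≤ p) (n : ℕ) (hn : 1 ≤ n) (i r : Fin n → ℕ)
    (hi : StrictMono i) (hr : ∀ k, 1 ≤ r k) (x : FP p)
    (hx : x = (List.ofFn fun k => xg p (i k) ^ r k).prod) :
    ((((∑ k, r k) + i ⟨n - 1, Nat.sub_lt hn Nat.one_pos⟩ : ℕ) : ℝ)) / 2 ≤
        (posN2 p i r : ℝ) ∧
      (posN2 p i r : ℝ) ≤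
        ((p : ℝ) - 1) * (((∑ k, r k) + i ⟨n - 1, Nat.sub_lt hn Nat.one_pos⟩ : ℕ) : ℝ) + 1 := by
  have hp1 : 1 ≤ p - 1 := by omega
  set L : Fin n := ⟨n - 1, Nat.sub_lt hn Nat.one_pos⟩ with hL
  set D : ℕ := (∑ k, r k) + i L with hD
  have hiL : ∀ k : Fin n, i k ≤ i L := fun k =>
    hi.monotone (Fin.le_def.mpr (by have := k.isLt; simp [hL]; omega))
  have htail : ∀ k : Fin n, tailSum r k ≤ ∑ k, r k := fun k =>
    Finset.sum_le_sum_of_subset (Finset.filter_subset _ _)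
  have hZ : 0 < n := hn
  have htail0 : tailSum r ⟨0, hZ⟩ = ∑ k, r k := by
    unfold tailSum
    congr 1
    apply Finset.filter_true_of_mem
    intro l _
    exact Fin.le_def.mpr (Nat.zero_le _)
  have hub : posN2 p i r ≤ (p - 1) * D + 1 := by
    apply Finset.sup_le
    intro k _
    have h1 : i k ≤ (p - 1) * i L := le_trans (hiL k) (Nat.le_mul_of_pos_left _ hp1)
    have h2 : (p - 1) * tailSum r k ≤ (p - 1) * ∑ k, r k :=
      Nat.mul_le_mul_left _ (htail k)
    calc i k + (p - 1) * tailSum r k + 1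
        ≤ (p - 1) * i L + (p - 1) * (∑ k, r k) + 1 := by omega
      _ = (p - 1) * D + 1 := by rw [hD]; ring
  have hlb1 : (∑ k, r k) ≤ posN2 p i r := by
    have := Finset.le_sup (f := fun k => i k + (p - 1) * tailSum r k + 1)
      (Finset.mem_univ (⟨0, hZ⟩ : Fin n))
    have h3 : (∑ k, r k) ≤ (p - 1) * tailSum r ⟨0, hZ⟩ := by
      rw [htail0]; exact Nat.le_mul_of_pos_left _ hp1
    calc (∑ k, r k) ≤ i ⟨0, hZ⟩ + (p - 1) * tailSum r ⟨0, hZ⟩ + 1 := by omega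
      _ ≤ _ := this
  have hlb2 : i L ≤ posN2 p i r := by
    have h4 : i L + (p - 1) * tailSum r L + 1 ≤ posN2 p i r :=
      Finset.le_sup (f := fun k => i k + (p - 1) * tailSum r k + 1)
        (Finset.mem_univ L)
    omega
  have hDle : D ≤ 2 * posN2 p i r := by omega
  have hpR : (2 : ℝ) ≤ (p : ℝ) := by exact_mod_cast hp
  have hcast : ((p - 1 : ℕ) : ℝ) = (p : ℝ) - 1 := by
    have : 1 ≤ p := by omega
    push_cast [this]; ring
  constructor
  · have := hDle
    have h := (Nat.cast_le (α := ℝ)).mpr this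
    push_cast at h ⊢
    linarith
  · have h := (Nat.cast_le (α := ℝ)).mpr hub
    push_cast [hcast] at h ⊢
    linarith
end

section
/- Let p ≥ 2 and let x ∈ F(p) be represented by a positive normal form x = x_{i₁}^{r₁}⋯x_{iₙ}^{rₙ} with n ≥ 1, set N₂(x) = max{ i_k + (p−1)(r_k + r_{k+1} + ⋯ + r_n) + 1 : k = 1,…,n }, and let f = ρ(x) be the corresponding piecewise-linear homeomorphism of ℝ. Then N₂(x) equals the y-coordinate of the last breakpoint of the graph of f; that is, if b = inf{ s ∈ ℝ : f is affine on [s,∞) }, then f(b) = N₂(x). -/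
open scoped BigOperators

/-!
Each generator `f_j` is the translation `t ↦ t + (p - 1)` on `[j + 1, ∞)` and lies strictly
below that translation to the left of `j + 1`. This shape (a translation by `c` from `B` on,
strictly below it before `B`) is preserved under composition, with explicit new `c` and `B`.
Hence `ρ(x)` is the translation by `(p - 1)(r₁ + ⋯ + rₙ)` exactly from some `B` on, and
unwinding the recursion for `B` gives `B + (p - 1)(r₁ + ⋯ + rₙ) = N₂(x)`. The strict
inequality makes `B` the least point from which `ρ(x)` is affine, so `f(b) = f(B) = N₂(x)`.
-/

structure TranslatesFrom (f : ℝ → ℝ) (c B : ℝ) : Prop where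
  eq_of_le : ∀ t, B ≤ t → f t = t + c
  lt_of_lt : ∀ t, t < B → f t < t + c

namespace TranslatesFrom

variable {f g : ℝ → ℝ} {c d B C : ℝ}

lemma le (hf : TranslatesFrom f c B) (t : ℝ) : f t ≤ t + c := by
  rcases lt_or_ge t B with ht | ht
  · exact (hf.lt_of_lt t ht).le
  · exact (hf.eq_of_le t ht).le

lemma comp (hf : TranslatesFrom f c B) (hg : TranslatesFrom g d C) :
    TranslatesFrom (g ∘ f) (c + d) (max B (C - c)) where
  eq_of_le t ht := by
    rw [max_le_iff] at ht
    have hft := hf.eq_of_le t ht.1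
    rw [Function.comp_apply, hg.eq_of_le _ (by linarith), hft]
    ring
  lt_of_lt t ht := by
    rw [Function.comp_apply]
    rcases lt_or_ge t B with htB | htB
    · linarith [hf.lt_of_lt t htB, hg.le (f t)]
    · have hft := hf.eq_of_le t htB
      have htC : t < C - c := (lt_max_iff.mp ht).resolve_left htB.not_gt
      linarith [hg.lt_of_lt (f t) (by linarith)]

lemma iterate (hf : TranslatesFrom f c B) (hc : 0 ≤ c) {m : ℕ} (hm : 1 ≤ m) :
    TranslatesFrom f^[m] (m * c) B := by
  induction m, hm using Nat.le_induction with
  | base => simpa using hf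
  | succ m _ ih =>
    have h := ih.comp hf
    rw [max_eq_left (sub_le_self B (by positivity))] at h
    rw [Function.iterate_succ', Nat.cast_succ, add_one_mul]
    exact h

lemma sInf_setOf_affine_eq (hf : TranslatesFrom f c B) :
    sInf {s : ℝ | ∃ a e : ℝ, ∀ t, s ≤ t → f t = a * t + e} = B := by
  refine IsLeast.csInf_eq ⟨⟨1, c, fun t ht => by rw [hf.eq_of_le t ht]; ring⟩, ?_⟩
  rintro s ⟨a, e, hs⟩
  by_contra! hsB
  -- Comparing at `B` and `B + 1` forces `a = 1` and `e = c`, contradicting strictness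
  -- at the midpoint of `s` and `B`.
  have h₀ := hf.eq_of_le B le_rfl
  have h₁ := hf.eq_of_le (B + 1) (by linarith)
  have hmid := hf.lt_of_lt ((s + B) / 2) (by linarith)
  rw [hs B hsB.le] at h₀
  rw [hs _ (by linarith)] at h₁ hmid
  have ha : a = 1 := by linarith
  subst ha
  linarith

end TranslatesFrom

lemma translatesFrom_fgen {p : ℕ} (hp : 1 < p) (j : ℕ) :
    TranslatesFrom (fgen p j) (p - 1) (j + 1) where
  eq_of_le t ht := by
    unfold fgen
    split_ifs with h₁ h₂
    · linarith
    · rw [le_antisymm h₂ ht]; ring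
    · ring
  lt_of_lt t ht := by
    have hp' : (1 : ℝ) < p := by exact_mod_cast hp
    unfold fgen
    split_ifs with h₁ h₂
    · linarith
    · nlinarith
    · linarith

lemma apply_pow_eq_iterate {M α : Type*} [Monoid M] (ρ : M → α → α)
    (hρmul : ∀ a b : M, ρ (a * b) = ρ b ∘ ρ a) (g : M) {m : ℕ} (hm : 1 ≤ m) :
    ρ (g ^ m) = (ρ g)^[m] := by
  induction m, hm using Nat.le_induction with
  | base => rw [pow_one, Function.iterate_one]
  | succ m _ ih => rw [pow_succ, hρmul, ih, Function.iterate_succ']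

lemma tailSum_zero {n : ℕ} (r : Fin (n + 1) → ℕ) : tailSum r 0 = ∑ k, r k := by
  simp [tailSum]

lemma tailSum_succ {n : ℕ} (r : Fin (n + 1) → ℕ) (k : Fin n) :
    tailSum r k.succ = tailSum (fun l => r l.succ) k := by
  simp [tailSum, Finset.sum_filter, Fin.sum_univ_succ, Fin.succ_le_succ_iff]

lemma posN2_succ (p : ℕ) {n : ℕ} (i r : Fin (n + 1) → ℕ) :
    posN2 p i r = max (i 0 + (p - 1) * ∑ k, r k + 1)
      (posN2 p (fun k => i k.succ) (fun k => r k.succ)) := by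
  conv_lhs => rw [posN2, Fin.univ_succ, Finset.sup_cons, Finset.sup_map]
  rw [tailSum_zero]
  simp only [Function.comp_def, Function.Embedding.coeFn_mk, tailSum_succ]
  rfl

section

variable {p : ℕ} (ρ : FP p → ℝ → ℝ)

lemma translatesFrom_rho_xg_pow (hp : 1 < p) (hρmul : ∀ a b : FP p, ρ (a * b) = ρ b ∘ ρ a)
    (hρgen : ∀ j : ℕ, ρ (xg p j) = fgen p j) (j : ℕ) {m : ℕ} (hm : 1 ≤ m) :
    TranslatesFrom (ρ (xg p j ^ m)) ((p - 1) * m) (j + 1) := by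
  have hc : (0 : ℝ) ≤ p - 1 := sub_nonneg.mpr (by exact_mod_cast hp.le)
  rw [apply_pow_eq_iterate ρ hρmul _ hm, hρgen, mul_comm]
  exact (translatesFrom_fgen hp j).iterate hc hm

lemma translatesFrom_rho_ofFn (hp : 1 < p) (hρmul : ∀ a b : FP p, ρ (a * b) = ρ b ∘ ρ a)
    (hρgen : ∀ j : ℕ, ρ (xg p j) = fgen p j) {n : ℕ} (i r : Fin (n + 1) → ℕ)
    (hr : ∀ k, 1 ≤ r k) :
    TranslatesFrom (ρ (List.ofFn fun k => xg p (i k) ^ r k).prod)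
      ((p - 1) * ∑ k, (r k : ℝ)) (posN2 p i r - (p - 1) * ∑ k, (r k : ℝ)) := by
  have hp' : ((p - 1 : ℕ) : ℝ) = p - 1 := Nat.cast_pred (by omega)
  induction n with
  | zero =>
    have hhead := translatesFrom_rho_xg_pow ρ hp hρmul hρgen (i 0) (hr 0)
    have hN : posN2 p i r = i 0 + (p - 1) * r 0 + 1 := by
      rw [posN2_succ]; simp [posN2]
    simp only [List.ofFn_succ, List.ofFn_zero, List.prod_singleton, hN]
    convert hhead using 2 <;> push_cast [hp', Fin.sum_univ_succ, Fin.sum_univ_zero] <;> ring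
  | succ n ih =>
    have htail := ih (fun k => i k.succ) (fun k => r k.succ) (fun k => hr k.succ)
    rw [List.ofFn_succ, List.prod_cons, hρmul]
    convert (translatesFrom_rho_xg_pow ρ hp hρmul hρgen (i 0) (hr 0)).comp htail using 1
    · rw [Fin.sum_univ_succ]; ring
    · rw [posN2_succ]
      push_cast [hp', Fin.sum_univ_succ]
      rw [← max_sub_sub_right]
      congr 1 <;> ring

end

theorem statement11_general (p : ℕ) (hp : 2 ≤ p) (n : ℕ) (hn : 1 ≤ n) (i r : Fin n → ℕ)
    (hr : ∀ k, 1 ≤ r k) (x : FP p)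
    (hx : x = (List.ofFn fun k => xg p (i k) ^ r k).prod)
    (ρ : FP p → ℝ → ℝ)
    (hρmul : ∀ a b : FP p, ρ (a * b) = ρ b ∘ ρ a)
    (hρgen : ∀ j : ℕ, ρ (xg p j) = fgen p j)
    (f : ℝ → ℝ) (hf : f = ρ x)
    (b : ℝ) (hb : b = sInf { s : ℝ | ∃ a c : ℝ, ∀ t : ℝ, s ≤ t → f t = a * t + c }) :
    f b = (posN2 p i r : ℝ) := by
  obtain ⟨m, rfl⟩ : ∃ m, n = m + 1 := ⟨n - 1, by omega⟩
  have h := translatesFrom_rho_ofFn ρ hp hρmul hρgen i r hr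
  rw [← hx, ← hf] at h
  rw [hb, h.sInf_setOf_affine_eq, h.eq_of_le _ le_rfl, sub_add_cancel]

/-- Proposition 5, last breakpoint. If `x ∈ F(p)` has positive normal
form `x_{i₁}^{r₁} ⋯ x_{iₙ}^{rₙ}` and `f = ρ(x)` is the corresponding piecewise-linear
homeomorphism of `ℝ`, then `N₂(x) = max { i_k + (p-1)(r_k + ⋯ + r_n) + 1 }` is the
`y`-coordinate of the last breakpoint of the graph of `f`: if
`b = inf { s | f is affine on [s,∞) }`, then `f(b) = N₂(x)`. -/
theorem statement11 (p : ℕ) (hp : 2 ≤ p) (n : ℕ) (hn : 1 ≤ n) (i r : Fin n → ℕ)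
    (hi : StrictMono i) (hr : ∀ k, 1 ≤ r k) (x : FP p)
    (hx : x = (List.ofFn fun k => xg p (i k) ^ r k).prod)
    (ρ : FP p → ℝ → ℝ)
    (hρmul : ∀ a b : FP p, ρ (a * b) = ρ b ∘ ρ a)
    (hρgen : ∀ j : ℕ, ρ (xg p j) = fgen p j)
    (f : ℝ → ℝ) (hf : f = ρ x)
    (b : ℝ) (hb : b = sInf { s : ℝ | ∃ a c : ℝ, ∀ t : ℝ, s ≤ t → f t = a * t + c }) :
    f b = (posN2 p i r : ℝ) :=
  statement11_general p hp n hn i r hr x hx ρ hρmul hρgen f hf b hb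
end

section
/- Let p ≥ 2 and k ≥ 1 be integers, and realize F(p) and F(p^k) as groups of piecewise-linear homeomorphisms of [0,1], so that F(p^k) ⊆ F(p). Then the map Φ_p carries F(p) into F(p), and for every x ∈ F(p^k) one has Φ_{p^k}(x) = Φ_p^{∘k}(x), the k-fold iterate of Φ_p applied to x. (Equivalently, the natural inclusion i : F(p^k) → F(p) satisfies i ∘ φ_{p^k}^{p^k−1} = φ_p^{k(p−1)} ∘ i for the shift maps.) -/
open scoped BigOperators

/-!
`Φ_p f` is the identity on `(−∞, 1 − 1/p]` and elsewhere is `f` conjugated by the affine map `t ↦ pt − (p − 1)`, which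
carries `[1 − 1/p, 1]` onto `[0, 1]`. Conjugating by `t ↦ pt − (p − 1)` and then by
`t ↦ qt − (q − 1)` is conjugating by their composite `t ↦ pqt − (pq − 1)`, so
`Φ_p ∘ Φ_q = Φ_{pq}` and hence `Φ_{p^k} = Φ_p^{∘k}`. For maps preserving positivity, `Φ_p` is
compatible with composition, so it sends permutations to permutations; it moves breakpoints
by `b ↦ (b + p − 1)/p` (plus the new breakpoint `1 − 1/p`), which preserves `ℤ[1/p]`, and it
keeps slopes.
-/

open Filter Topology

lemma one_sub_one_div_lt_iff {a t : ℝ} (ha : 0 < a) :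
    1 - 1 / a < t ↔ 0 < a * t - (a - 1) := by
  have h : a * t - (a - 1) = a * (t - (1 - 1 / a)) := by field_simp
  rw [h, mul_pos_iff_of_pos_left ha, sub_pos]

lemma le_one_sub_one_div_iff {a t : ℝ} (ha : 0 < a) :
    t ≤ 1 - 1 / a ↔ a * t - (a - 1) ≤ 0 := by
  rw [← not_lt, one_sub_one_div_lt_iff ha, not_lt]

section PhiMap

variable {p : ℕ} {f g : ℝ → ℝ} {t : ℝ}

lemma phiMap_of_le (h : t ≤ 1 - 1 / (p : ℝ)) : PhiMap p f t = t := if_pos h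

lemma phiMap_of_lt (h : 1 - 1 / (p : ℝ) < t) :
    PhiMap p f t = ((p - 1) + f (p * t - (p - 1))) / p := if_neg h.not_ge

lemma phiMap_of_nonpos (hp : 0 < p) (ht : t ≤ 0) : PhiMap p f t = t := by
  have : 1 / (p : ℝ) ≤ 1 := div_le_one_of_le₀ (by exact_mod_cast hp) (by positivity)
  exact phiMap_of_le (by linarith)

lemma phiMap_of_one_le (hp : 0 < p) (hf : ∀ s, 1 ≤ s → f s = s) (ht : 1 ≤ t) :
    PhiMap p f t = t := by
  have hlt : 1 - 1 / (p : ℝ) < t := by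
    have : 0 < 1 / (p : ℝ) := by positivity
    linarith
  rw [phiMap_of_lt hlt, hf _ (by nlinarith)]
  field_simp
  ring

lemma phiMap_id (hp : 0 < p) : PhiMap p id = id := by
  funext t
  by_cases ht : t ≤ 1 - 1 / (p : ℝ)
  · exact phiMap_of_le ht
  · rw [phiMap_of_lt (not_le.1 ht), id_eq, id_eq]
    field_simp
    ring

lemma phiMap_comp (hp : 0 < p) (hg : ∀ s, 0 < s → 0 < g s) :
    PhiMap p (f ∘ g) = PhiMap p f ∘ PhiMap p g := by
  have hp' : (0 : ℝ) < p := by exact_mod_cast hp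
  funext t
  by_cases ht : t ≤ 1 - 1 / (p : ℝ)
  · simp only [Function.comp_apply, phiMap_of_le ht]
  · have ht := (one_sub_one_div_lt_iff hp').1 (not_le.1 ht)
    have hgt := (one_sub_one_div_lt_iff hp').2 ht
    set s := (p : ℝ) * t - (p - 1)
    have hpg : (p : ℝ) * (((p - 1) + g s) / p) - (p - 1) = g s := by field_simp; ring
    have hgt' : 1 - 1 / (p : ℝ) < ((p - 1) + g s) / p := by
      rw [one_sub_one_div_lt_iff hp', hpg]
      exact hg s ht
    simp only [Function.comp_apply, phiMap_of_lt hgt, phiMap_of_lt hgt', hpg, s]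

lemma phiMap_mul {q : ℕ} (hp : 0 < p) (hq : 0 < q) (f : ℝ → ℝ) :
    PhiMap p (PhiMap q f) = PhiMap (p * q) f := by
  have hp' : (0 : ℝ) < p := by exact_mod_cast hp
  have hq' : (0 : ℝ) < q := by exact_mod_cast hq
  funext t
  by_cases ht : t ≤ 1 - 1 / (p : ℝ)
  · have : 1 / ((p : ℝ) * q) ≤ 1 / p :=
      one_div_le_one_div_of_le hp' (le_mul_of_one_le_right hp'.le (by exact_mod_cast hq))
    rw [phiMap_of_le ht, phiMap_of_le (by push_cast; linarith)]
  · have htp := not_le.1 ht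
    have hcomp : (q : ℝ) * ((p : ℝ) * t - (p - 1)) - (q - 1) = (p * q) * t - (p * q - 1) := by
      ring
    rw [phiMap_of_lt htp]
    by_cases htpq : t ≤ 1 - 1 / ((p * q : ℕ) : ℝ)
    · have htq : (p : ℝ) * t - (p - 1) ≤ 1 - 1 / (q : ℝ) := by
        rw [le_one_sub_one_div_iff hq', hcomp, ← le_one_sub_one_div_iff (by positivity)]
        exact_mod_cast htpq
      rw [phiMap_of_le htq, phiMap_of_le htpq]
      field_simp
      ring
    · have htq : 1 - 1 / (q : ℝ) < (p : ℝ) * t - (p - 1) := by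
        rw [one_sub_one_div_lt_iff hq', hcomp, ← one_sub_one_div_lt_iff (by positivity)]
        exact_mod_cast not_le.1 htpq
      rw [phiMap_of_lt htq, phiMap_of_lt (not_le.1 htpq)]
      push_cast
      rw [hcomp]
      field_simp
      ring

lemma phiMap_pow {k : ℕ} (hp : 0 < p) (hk : 1 ≤ k) (f : ℝ → ℝ) :
    PhiMap (p ^ k) f = (PhiMap p)^[k] f := by
  induction k, hk using Nat.le_induction with
  | base => simp
  | succ k _ ih =>
    rw [pow_succ', ← phiMap_mul hp (pow_pos hp k), ih, Function.iterate_succ_apply']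

lemma monotone_phiMap (hp : 0 < p) (hf : Monotone f) (hf0 : f 0 = 0) :
    Monotone (PhiMap p f) := by
  have hp' : (0 : ℝ) < p := by exact_mod_cast hp
  intro a b hab
  by_cases hb : b ≤ 1 - 1 / (p : ℝ)
  · rw [phiMap_of_le hb, phiMap_of_le (hab.trans hb)]
    exact hab
  have hb' := not_le.1 hb
  rw [phiMap_of_lt hb']
  by_cases ha : a ≤ 1 - 1 / (p : ℝ)
  · have : 0 ≤ f (p * b - (p - 1)) :=
      hf0 ▸ hf ((one_sub_one_div_lt_iff hp').1 hb').le
    have ha' := (le_one_sub_one_div_iff hp').1 ha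
    rw [phiMap_of_le ha, le_div_iff₀ hp']
    linarith
  · rw [phiMap_of_lt (not_le.1 ha)]
    gcongr
    exact hf (by gcongr)

end PhiMap

lemma IsPAdicRational.of_pow {p m : ℕ} {x : ℝ} (h : IsPAdicRational (p ^ m) x) :
    IsPAdicRational p x := by
  obtain ⟨a, n, rfl⟩ := h
  exact ⟨a, m * n, by push_cast; rw [pow_mul]⟩

lemma IsPAdicRational.add_intCast {p : ℕ} {x : ℝ} (hp : p ≠ 0) (h : IsPAdicRational p x)
    (b : ℤ) : IsPAdicRational p (x + b) := by
  obtain ⟨a, n, rfl⟩ := h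
  refine ⟨a + b * p ^ n, n, ?_⟩
  push_cast
  field_simp

lemma IsPAdicRational.div_natCast {p : ℕ} {x : ℝ} (h : IsPAdicRational p x) :
    IsPAdicRational p (x / p) := by
  obtain ⟨a, n, rfl⟩ := h
  exact ⟨a, n + 1, by rw [div_div, pow_succ]⟩

def HasPowSlopeAt (p : ℕ) (f : ℝ → ℝ) (t : ℝ) : Prop :=
  ∃ (k : ℤ) (c : ℝ), ∀ᶠ s in 𝓝 t, f s = (p : ℝ) ^ k * s + c

section HasPowSlopeAt

variable {p : ℕ} {f : ℝ → ℝ} {t : ℝ}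

lemma hasPowSlopeAt_iff : HasPowSlopeAt p f t ↔
    ∃ ε > (0 : ℝ), ∃ (k : ℤ) (c : ℝ), ∀ s : ℝ, |s - t| < ε →
      f s = (p : ℝ) ^ k * s + c := by
  simp only [HasPowSlopeAt, Metric.eventually_nhds_iff, Real.dist_eq]
  exact ⟨fun ⟨k, c, ε, hε, h⟩ => ⟨ε, hε, k, c, fun s => @h s⟩,
    fun ⟨ε, hε, k, c, h⟩ => ⟨k, c, ε, hε, fun s => h s⟩⟩

lemma HasPowSlopeAt.of_pow {m : ℕ} (h : HasPowSlopeAt (p ^ m) f t) : HasPowSlopeAt p f t := by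
  obtain ⟨k, c, h⟩ := h
  refine ⟨m * k, c, h.mono fun s hs => ?_⟩
  rw [hs, Nat.cast_pow, ← zpow_natCast, ← zpow_mul]

lemma HasPowSlopeAt.phiMap (hp : 0 < p) (ht : 1 - 1 / (p : ℝ) < t)
    (h : HasPowSlopeAt p f (p * t - (p - 1))) : HasPowSlopeAt p (PhiMap p f) t := by
  obtain ⟨k, c, h⟩ := h
  have hA : Tendsto (fun s : ℝ => (p : ℝ) * s - (p - 1)) (𝓝 t) (𝓝 (p * t - (p - 1))) :=
    (by fun_prop : Continuous fun s : ℝ => (p : ℝ) * s - (p - 1)).tendsto t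
  refine ⟨k, ((p - 1) * (1 - (p : ℝ) ^ k) + c) / p, ?_⟩
  filter_upwards [hA.eventually h, Ioi_mem_nhds ht] with s hs hs'
  rw [phiMap_of_lt hs', hs]
  field_simp
  ring

end HasPowSlopeAt

lemma plSet_pow_subset (p k : ℕ) : PLSet (p ^ k) ⊆ PLSet p := by
  rintro f ⟨hmono, h0, h1, B, hB, hloc⟩
  refine ⟨hmono, h0, h1, B, fun b hb => (hB b hb).of_pow, fun t ht => ?_⟩
  exact hasPowSlopeAt_iff.1 (hasPowSlopeAt_iff.2 (hloc t ht)).of_pow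

lemma exists_perm_coe_eq_phiMap {p : ℕ} (hp : 0 < p) (f : Equiv.Perm ℝ)
    (hf : ∀ s, 0 < f s ↔ 0 < s) : ∃ g : Equiv.Perm ℝ, ⇑g = PhiMap p f := by
  have hf' : ∀ s, 0 < s → 0 < f s := fun s => (hf s).2
  have hfsymm : ∀ s, 0 < s → 0 < f.symm s := fun s hs => by rwa [← hf, f.apply_symm_apply]
  refine ⟨⟨PhiMap p f, PhiMap p f.symm, ?_, ?_⟩, rfl⟩
  · rw [Function.leftInverse_iff_comp, ← phiMap_comp hp hf', f.symm_comp_self, phiMap_id hp]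
  · rw [Function.rightInverse_iff_comp, ← phiMap_comp hp hfsymm, f.self_comp_symm,
      phiMap_id hp]

lemma mem_plSet_of_coe_eq_phiMap {p : ℕ} (hp : 0 < p) {f g : Equiv.Perm ℝ} (hf : f ∈ PLSet p)
    (hg : ⇑g = PhiMap p f) : g ∈ PLSet p := by
  obtain ⟨hmono, h0, h1, B, hB, hloc⟩ := hf
  refine ⟨hg ▸ monotone_phiMap hp hmono (h0 0 le_rfl),
    fun t ht => by rw [hg, phiMap_of_nonpos hp ht],
    fun t ht => by rw [hg, phiMap_of_one_le hp h1 ht],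
    (insert 0 B).image fun b => (b + (p - 1)) / p, ?_, fun t ht => ?_⟩
  · simp only [Finset.forall_mem_image, Finset.mem_insert]
    intro b hb
    have hb : IsPAdicRational p b := hb.elim (fun h => ⟨0, 0, by simp [h]⟩) (hB b)
    have := (hb.add_intCast hp.ne' (p - 1)).div_natCast
    push_cast at this
    exact this
  rw [← hasPowSlopeAt_iff, hg]
  have hpt : ∀ u, u ∈ insert 0 B → (u + (p - 1)) / p ≠ t := fun u hu hut =>
    ht (Finset.mem_coe.2 (Finset.mem_image.2 ⟨u, hu, hut⟩))
  rcases lt_trichotomy t (1 - 1 / (p : ℝ)) with hlt | rfl | hgt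
  · refine ⟨0, 0, ?_⟩
    filter_upwards [Iio_mem_nhds hlt] with s hs
    simp [phiMap_of_le hs.le]
  · exact absurd (by field_simp; ring) (hpt 0 (Finset.mem_insert_self 0 B))
  · refine HasPowSlopeAt.phiMap hp hgt (hasPowSlopeAt_iff.2 (hloc _ fun hmem => ?_))
    exact hpt _ (Finset.mem_insert_of_mem hmem) (by field_simp; ring)

lemma exists_mem_plSet_coe_eq_phiMap {p : ℕ} (hp : 0 < p) {f : Equiv.Perm ℝ}
    (hf : f ∈ PLSet p) : ∃ g ∈ PLSet p, ⇑g = PhiMap p f := by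
  have hsm : StrictMono f := hf.1.strictMono_of_injective f.injective
  have hpos : ∀ s, 0 < f s ↔ 0 < s := fun s => by
    simpa only [hf.2.1 0 le_rfl] using hsm.lt_iff_lt (a := 0) (b := s)
  obtain ⟨g, hg⟩ := exists_perm_coe_eq_phiMap hp f hpos
  exact ⟨g, mem_plSet_of_coe_eq_phiMap hp hf hg, hg⟩

/-- Proposition 11. For `p ≥ 2`, `k ≥ 1`, realizing `F(p)` and `F(p^k)`
as groups of piecewise-linear homeomorphisms (so `F(p^k) ⊆ F(p)`): the map `Φ_p` carries
`F(p)` into `F(p)`, and for every `x ∈ F(p^k)` one has `Φ_{p^k}(x) = Φ_p^{∘k}(x)`. -/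
theorem statement12 (p k : ℕ) (hp : 2 ≤ p) (hk : 1 ≤ k) :
    PLSet (p ^ k) ⊆ PLSet p ∧
      (∀ f ∈ PLSet p, ∃ g ∈ PLSet p, ⇑g = PhiMap p ⇑f) ∧
      ∀ x ∈ PLSet (p ^ k), PhiMap (p ^ k) ⇑x = (PhiMap p)^[k] ⇑x :=
  ⟨plSet_pow_subset p k, fun _ hf => exists_mem_plSet_coe_eq_phiMap (by omega) hf,
    fun x _ => phiMap_pow (by omega) hk x⟩
end

section
/- For each integer k ≥ 1, let w_k = x₀x₁⋯x_{k−1}·x_k²·x_{k+1}⁻¹x_k⁻¹x_{k−1}⁻¹⋯x₁⁻¹x₀⁻¹ ∈ F(2). Then the homeomorphism ρ(w_k) of ℝ fixes every point t with t ≤ 0 or t ≥ 1 (all its breakpoints lie in the square [0,1]×[0,1]), yet the word length of w_k grows linearly: |w_k|₂ ≥ k. -/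
open scoped BigOperators

/-!
Let `P_m = x₀x₁⋯x_{m-1}`. The identity `w_k · P_{k+1} x_{k+1} = P_k x_k²`, together with the
explicit action of the prefixes (`ρ(P_m)` fixes `t ≤ 0`, translates `t ≥ 1` by `m`, and is
`t ↦ 2^m (t - 1) + m + 1` near `1`), computes `ρ(w_k)`: it is the identity off `[0,1]`, and at
`t = 1 - 2^{-(k+1)}` its slope jumps from `1` to `1/2`.

On the other hand `f_i` and `f_i⁻¹` are affine near every non-integer, `f_i` preserves `2^{-n}ℤ`
and `f_i⁻¹` maps it into `2^{-(n+1)}ℤ`, so the image of a word of length `n` in `x₀^{±1}, x₁^{±1}`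
is affine near every point outside `2^{-n}ℤ`. As `1 - 2^{-(k+1)} ∉ 2^{-k}ℤ`, no such word of
length `≤ k` represents `w_k`.
-/

open Filter Topology Function Set

section GroupAction

variable {G α : Type*} [Group G] (ρ : G → α → α) (hρ : ∀ a b, ρ (a * b) = ρ b ∘ ρ a)
include hρ

theorem rho_one_eq_id_of_injective {g : G} (hg : Injective (ρ g)) : ρ 1 = id := by
  funext t
  apply hg
  rw [← Function.comp_apply (f := ρ g), ← hρ, one_mul]
  rfl

theorem leftInverse_rho_inv (h1 : ρ 1 = id) (a : G) : LeftInverse (ρ a⁻¹) (ρ a) := by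
  intro t
  rw [← Function.comp_apply (f := ρ a⁻¹), ← hρ, mul_inv_cancel, h1, id]

theorem rho_inv_eq (h1 : ρ 1 = id) {a : G} {g : α → α} (hg : LeftInverse g (ρ a)) :
    ρ a⁻¹ = g := by
  funext t
  conv_lhs =>
    rw [← hg (ρ a⁻¹ t), ← Function.comp_apply (f := ρ a), ← hρ, inv_mul_cancel, h1]
  rfl

end GroupAction

theorem fgen_two_of_le {i : ℕ} {t : ℝ} (h : t ≤ i) : fgen 2 i t = t := if_pos h

theorem fgen_two_of_mem_Icc {i : ℕ} {t : ℝ} (h : t ∈ Icc (i : ℝ) (i + 1)) :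
    fgen 2 i t = 2 * t - i := by
  unfold fgen
  split_ifs with h₁ h₂
  · linarith [le_antisymm h₁ h.1]
  · push_cast; ring
  · exact absurd h.2 h₂

theorem fgen_two_of_ge {i : ℕ} {t : ℝ} (h : (i : ℝ) + 1 ≤ t) : fgen 2 i t = t + 1 := by
  unfold fgen
  split_ifs with h₁ h₂
  · linarith
  · push_cast; linarith [le_antisymm h₂ h]
  · push_cast; ring

noncomputable def fgenTwoInv (i : ℕ) (t : ℝ) : ℝ :=
  if t ≤ i then t else if t ≤ i + 2 then (t + i) / 2 else t - 1

theorem leftInverse_fgenTwoInv (i : ℕ) : LeftInverse (fgenTwoInv i) (fgen 2 i) := by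
  intro t
  rcases le_or_gt t i with h | h
  · rw [fgen_two_of_le h, fgenTwoInv, if_pos h]
  rcases le_or_gt t (i + 1) with h' | h'
  · rw [fgen_two_of_mem_Icc ⟨h.le, h'⟩, fgenTwoInv, if_neg (by linarith), if_pos (by linarith)]
    ring
  · rw [fgen_two_of_ge h'.le, fgenTwoInv, if_neg (by linarith), if_neg (by linarith)]
    ring

theorem rightInverse_fgenTwoInv (i : ℕ) : RightInverse (fgenTwoInv i) (fgen 2 i) := by
  intro t
  unfold fgenTwoInv
  split_ifs with h₁ h₂
  · exact fgen_two_of_le h₁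
  · rw [fgen_two_of_mem_Icc ⟨by linarith, by linarith⟩]; ring
  · rw [fgen_two_of_ge (by linarith)]; ring

def dyadics (n : ℕ) : Set ℝ := {t | ∃ a : ℤ, t * 2 ^ n = a}

theorem dyadics_mono : Monotone dyadics := by
  intro m n hmn t ⟨a, ha⟩
  refine ⟨a * 2 ^ (n - m), ?_⟩
  rw [← Nat.add_sub_cancel' hmn, pow_add, ← mul_assoc, ha, Nat.add_sub_cancel_left]
  push_cast; ring

theorem fgen_two_mem_dyadics (i : ℕ) {n : ℕ} {t : ℝ} (ht : t ∈ dyadics n) :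
    fgen 2 i t ∈ dyadics n := by
  obtain ⟨a, ha⟩ := ht
  unfold fgen
  split_ifs
  · exact ⟨a, ha⟩
  · exact ⟨2 * a - i * 2 ^ n, by push_cast; linear_combination 2 * ha⟩
  · exact ⟨a + 2 ^ n, by push_cast; linear_combination ha⟩

theorem fgenTwoInv_mem_dyadics (i : ℕ) {n : ℕ} {t : ℝ} (ht : t ∈ dyadics n) :
    fgenTwoInv i t ∈ dyadics (n + 1) := by
  obtain ⟨a, ha⟩ := ht
  unfold fgenTwoInv
  split_ifs
  · exact ⟨2 * a, by push_cast; linear_combination 2 * ha⟩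
  · exact ⟨a + i * 2 ^ n, by push_cast; linear_combination ha⟩
  · exact ⟨2 * a - 2 * 2 ^ n, by push_cast; linear_combination 2 * ha⟩

theorem notMem_dyadics_of_odd {n : ℕ} {t : ℝ} {b : ℤ} (ht : t * 2 ^ (n + 1) = 2 * b + 1) :
    t ∉ dyadics n := by
  rintro ⟨a, ha⟩
  have : (2 * a : ℝ) = 2 * b + 1 := by rw [← ht, pow_succ, ← mul_assoc, ha]; ring
  have : 2 * a = 2 * b + 1 := by exact_mod_cast this
  omega

theorem one_sub_inv_two_pow_succ_notMem_dyadics (k : ℕ) : 1 - 1 / 2 ^ (k + 1) ∉ dyadics k := by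
  refine notMem_dyadics_of_odd (b := 2 ^ k - 1) ?_
  rw [sub_mul, one_div_mul_cancel (by positivity)]
  push_cast; ring

theorem natCast_mem_dyadics (i n : ℕ) : (i : ℝ) ∈ dyadics n :=
  ⟨i * 2 ^ n, by push_cast; ring⟩

def IsLocallyAffineAt (f : ℝ → ℝ) (t : ℝ) : Prop :=
  ∃ m c : ℝ, f =ᶠ[𝓝 t] fun s => m * s + c

theorem IsLocallyAffineAt.comp {f g : ℝ → ℝ} {t : ℝ} (hg : IsLocallyAffineAt g (f t))
    (hf : IsLocallyAffineAt f t) : IsLocallyAffineAt (g ∘ f) t := by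
  obtain ⟨m, c, hf⟩ := hf
  obtain ⟨m', c', hg⟩ := hg
  have hlim : Tendsto f (𝓝 t) (𝓝 (f t)) := by
    rw [hf.eq_of_nhds]
    exact ((continuous_const.mul continuous_id).add continuous_const).tendsto t |>.congr' hf.symm
  refine ⟨m' * m, m' * c + c', ?_⟩
  filter_upwards [hg.comp_tendsto hlim, hf] with s hgs hfs
  simp only [Function.comp_apply] at hgs ⊢
  rw [hgs, hfs]
  ring

theorem isLocallyAffineAt_id (t : ℝ) : IsLocallyAffineAt id t :=
  ⟨1, 0, .of_forall fun s => by simp⟩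

theorem isLocallyAffineAt_fgen_two (i : ℕ) {t : ℝ} (ht : t ∉ dyadics 0) :
    IsLocallyAffineAt (fgen 2 i) t := by
  have hi : t ≠ i := fun h => ht (h ▸ natCast_mem_dyadics i 0)
  have hi' : t ≠ i + 1 := fun h => ht (by rw [h]; exact_mod_cast natCast_mem_dyadics (i + 1) 0)
  rcases hi.lt_or_gt with h | h
  · exact ⟨1, 0, eventually_of_mem (Iio_mem_nhds h) fun s hs => by
      rw [fgen_two_of_le (le_of_lt hs)]; ring⟩
  rcases hi'.lt_or_gt with h' | h'
  · exact ⟨2, -i, eventually_of_mem (Ioo_mem_nhds h h') fun s hs => by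
      rw [fgen_two_of_mem_Icc (Ioo_subset_Icc_self hs)]; ring⟩
  · exact ⟨1, 1, eventually_of_mem (Ioi_mem_nhds h') fun s hs => by
      rw [fgen_two_of_ge (le_of_lt hs)]; ring⟩

theorem isLocallyAffineAt_fgenTwoInv (i : ℕ) {t : ℝ} (ht : t ∉ dyadics 0) :
    IsLocallyAffineAt (fgenTwoInv i) t := by
  have hi : t ≠ i := fun h => ht (h ▸ natCast_mem_dyadics i 0)
  have hi' : t ≠ i + 2 := fun h => ht (by rw [h]; exact_mod_cast natCast_mem_dyadics (i + 2) 0)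
  rcases hi.lt_or_gt with h | h
  · exact ⟨1, 0, eventually_of_mem (Iio_mem_nhds h) fun s hs => by
      rw [fgenTwoInv, if_pos (le_of_lt hs)]; ring⟩
  rcases hi'.lt_or_gt with h' | h'
  · exact ⟨1 / 2, i / 2, eventually_of_mem (Ioo_mem_nhds h h') fun s hs => by
      rw [fgenTwoInv, if_neg (not_le.2 hs.1), if_pos hs.2.le]; ring⟩
  · exact ⟨1, -1, eventually_of_mem (Ioi_mem_nhds h') fun s hs => by
      rw [fgenTwoInv, if_neg (by linarith [mem_Ioi.1 hs]), if_neg (not_le.2 hs)]; ring⟩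

theorem not_isLocallyAffineAt_of_slopes {f : ℝ → ℝ} {t η a₁ b₁ a₂ b₂ : ℝ}
    (hη : 0 < η) (ha : a₁ ≠ a₂) (h₁ : ∀ s ∈ Icc (t - η) t, f s = a₁ * s + b₁)
    (h₂ : ∀ s ∈ Icc t (t + η), f s = a₂ * s + b₂) : ¬ IsLocallyAffineAt f t := by
  rintro ⟨m, c, hf⟩
  obtain ⟨ε, hε, hball⟩ := Metric.eventually_nhds_iff.1 hf
  set δ := min (ε / 2) η
  have hδ : 0 < δ := lt_min (by linarith) hη
  have hδε : δ < ε := (min_le_left _ _).trans_lt (by linarith)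
  have hδη : δ ≤ η := min_le_right _ _
  have hl : f (t - δ) = m * (t - δ) + c :=
    hball (by rwa [Real.dist_eq, sub_sub_cancel_left, abs_neg, abs_of_pos hδ])
  have hc : f t = m * t + c := hball (by rwa [dist_self])
  have hr : f (t + δ) = m * (t + δ) + c :=
    hball (by rwa [Real.dist_eq, add_sub_cancel_left, abs_of_pos hδ])
  have hl₁ := h₁ (t - δ) ⟨by linarith, by linarith⟩
  have hc₁ := h₁ t ⟨by linarith, le_rfl⟩
  have hc₂ := h₂ t ⟨le_rfl, by linarith⟩
  have hr₂ := h₂ (t + δ) ⟨by linarith, by linarith⟩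
  have : a₁ * δ = a₂ * δ := by
    linear_combination hc - hc₁ - hl + hl₁ + hr₂ - hc₂ - hr + hc
  exact ha (mul_right_cancel₀ hδ.ne' this)

theorem xg_inv_mul_mul (p : ℕ) {i j : ℕ} (h : i < j) :
    (xg p i)⁻¹ * xg p j * xg p i = xg p (j + p - 1) :=
  PresentedGroup.mk_eq_mk_of_mul_inv_mem ⟨i, j, h, rfl⟩

theorem closure_xg_eq_top {p : ℕ} (hp : 2 ≤ p) :
    Subgroup.closure {g : FP p | ∃ i, i < p ∧ g = xg p i} = ⊤ := by
  have htop : Subgroup.closure (range (xg p)) = ⊤ := PresentedGroup.closure_range_of _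
  rw [eq_top_iff, ← htop, Subgroup.closure_le]
  rintro _ ⟨j, rfl⟩
  induction j using Nat.strong_induction_on with
  | _ j ih =>
    by_cases hj : j < p
    · exact Subgroup.subset_closure ⟨j, hj, rfl⟩
    · have hconj := xg_inv_mul_mul p (i := 0) (j := j + 1 - p) (by omega)
      rw [show j + 1 - p + p - 1 = j by omega] at hconj
      rw [← hconj]
      exact mul_mem (mul_mem (inv_mem (ih 0 (by omega))) (ih _ (by omega))) (ih 0 (by omega))

theorem le_wordLength {G : Type*} [Group G] {S : Set G} {x : G} {k : ℕ}
    (hx : x ∈ Subgroup.closure S)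
    (h : ∀ l : List G, (∀ g ∈ l, g ∈ S ∨ g⁻¹ ∈ S) → l.prod = x → k ≤ l.length) :
    k ≤ wordLength S x := by
  rw [← SetLike.mem_coe, ← Subgroup.coe_toSubmonoid, Subgroup.closure_toSubmonoid] at hx
  obtain ⟨l, hl, rfl⟩ := Submonoid.exists_list_of_mem_closure hx
  refine le_csInf ⟨l.length, l, rfl, fun g hg => ?_, rfl⟩ ?_
  · simpa only [Set.mem_union, Set.mem_inv] using hl g hg
  · rintro n ⟨l', rfl, hl', hprod⟩
    exact h l' hl' hprod

noncomputable def xgPrefix (p m : ℕ) : FP p := (List.ofFn fun t : Fin m => xg p t).prod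

theorem xgPrefix_zero (p : ℕ) : xgPrefix p 0 = 1 := rfl

theorem xgPrefix_succ (p m : ℕ) : xgPrefix p (m + 1) = xgPrefix p m * xg p m := by
  rw [xgPrefix, List.ofFn_succ_last, List.prod_append, List.prod_singleton]
  rfl

noncomputable def thompsonW (k : ℕ) : FP 2 :=
  xgPrefix 2 k * xg 2 k ^ 2 * (xg 2 (k + 1))⁻¹ * (xgPrefix 2 (k + 1))⁻¹

section Action

variable (ρ : FP 2 → ℝ → ℝ) (hρmul : ∀ a b : FP 2, ρ (a * b) = ρ b ∘ ρ a)
  (hρgen : ∀ j : ℕ, ρ (xg 2 j) = fgen 2 j)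
include hρmul hρgen

theorem rho_one : ρ 1 = id :=
  rho_one_eq_id_of_injective ρ hρmul (g := xg 2 0) <| by
    rw [hρgen]; exact (leftInverse_fgenTwoInv 0).injective

theorem rho_xg_inv (i : ℕ) : ρ (xg 2 i)⁻¹ = fgenTwoInv i :=
  rho_inv_eq ρ hρmul (rho_one ρ hρmul hρgen) (by rw [hρgen]; exact leftInverse_fgenTwoInv i)

theorem isLocallyAffineAt_rho_list_prod (l : List (FP 2))
    (hl : ∀ g ∈ l, g ∈ range (xg 2) ∨ g⁻¹ ∈ range (xg 2)) {t : ℝ}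
    (ht : t ∉ dyadics l.length) : IsLocallyAffineAt (ρ l.prod) t := by
  induction l generalizing t with
  | nil => rw [List.prod_nil, rho_one ρ hρmul hρgen]; exact isLocallyAffineAt_id t
  | cons g l ih =>
    have ht₀ : t ∉ dyadics 0 := fun h => ht (dyadics_mono (Nat.zero_le _) h)
    have hl' : ∀ g ∈ l, g ∈ range (xg 2) ∨ g⁻¹ ∈ range (xg 2) :=
      fun g hg => hl g (List.mem_cons_of_mem _ hg)
    rw [List.prod_cons, hρmul]
    rcases hl g List.mem_cons_self with ⟨i, rfl⟩ | ⟨i, hi⟩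
    · rw [hρgen]
      refine (ih hl' fun h => ht ?_).comp (isLocallyAffineAt_fgen_two i ht₀)
      simpa only [leftInverse_fgenTwoInv i t, List.length_cons] using fgenTwoInv_mem_dyadics i h
    · rw [← inv_inv g, ← hi, rho_xg_inv ρ hρmul hρgen]
      refine (ih hl' fun h => ht ?_).comp (isLocallyAffineAt_fgenTwoInv i ht₀)
      have := fgen_two_mem_dyadics i h
      rw [rightInverse_fgenTwoInv i t] at this
      exact dyadics_mono (Nat.le_succ _) this

theorem rho_xgPrefix_succ_apply (m : ℕ) (t : ℝ) :
    ρ (xgPrefix 2 (m + 1)) t = fgen 2 m (ρ (xgPrefix 2 m) t) := by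
  rw [xgPrefix_succ, hρmul, hρgen]; rfl

theorem rho_xgPrefix_of_nonpos (m : ℕ) {t : ℝ} (ht : t ≤ 0) : ρ (xgPrefix 2 m) t = t := by
  induction m with
  | zero => rw [xgPrefix_zero, rho_one ρ hρmul hρgen, id]
  | succ m ih =>
    rw [rho_xgPrefix_succ_apply ρ hρmul hρgen, ih, fgen_two_of_le (ht.trans m.cast_nonneg)]

theorem rho_xgPrefix_of_one_le (m : ℕ) {t : ℝ} (ht : 1 ≤ t) :
    ρ (xgPrefix 2 m) t = t + m := by
  induction m with
  | zero => rw [xgPrefix_zero, rho_one ρ hρmul hρgen, id, Nat.cast_zero, add_zero]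
  | succ m ih =>
    rw [rho_xgPrefix_succ_apply ρ hρmul hρgen, ih, fgen_two_of_ge (by linarith)]
    push_cast; ring

theorem rho_xgPrefix_of_mem_Icc (m : ℕ) {t : ℝ} (ht : 2 ^ m * (t - 1) ∈ Icc (-1) 0) :
    ρ (xgPrefix 2 m) t = 2 ^ m * (t - 1) + m + 1 := by
  induction m with
  | zero => rw [xgPrefix_zero, rho_one ρ hρmul hρgen, id]; ring
  | succ m ih =>
    rw [pow_succ] at ht
    have ht' : 2 ^ m * (t - 1) ∈ Icc (-1 / 2) 0 := ⟨by linarith [ht.1], by linarith [ht.2]⟩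
    rw [rho_xgPrefix_succ_apply ρ hρmul hρgen, ih ⟨by linarith [ht'.1], ht'.2⟩,
      fgen_two_of_mem_Icc ⟨by linarith [ht'.1], by linarith [ht'.2]⟩, pow_succ]
    push_cast; ring

theorem rho_thompsonW_eq_of {k : ℕ} {t u : ℝ}
    (h : fgen 2 (k + 1) (ρ (xgPrefix 2 (k + 1)) u) = fgen 2 k (fgen 2 k (ρ (xgPrefix 2 k) t))) :
    ρ (thompsonW k) t = u := by
  have hrel : thompsonW k * (xgPrefix 2 (k + 1) * xg 2 (k + 1)) =
      xgPrefix 2 k * xg 2 k * xg 2 k := by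
    unfold thompsonW; rw [pow_two]; group
  have hinj := (leftInverse_rho_inv ρ hρmul (rho_one ρ hρmul hρgen)
    (xgPrefix 2 (k + 1) * xg 2 (k + 1))).injective
  apply hinj
  have := congrFun (congrArg ρ hrel) t
  simp only [hρmul, hρgen, Function.comp_apply] at this ⊢
  rw [this, h]

theorem rho_thompsonW_of_nonpos (k : ℕ) {t : ℝ} (ht : t ≤ 0) : ρ (thompsonW k) t = t := by
  apply rho_thompsonW_eq_of ρ hρmul hρgen
  have hk : t ≤ k := ht.trans k.cast_nonneg
  simp only [rho_xgPrefix_of_nonpos ρ hρmul hρgen _ ht]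
  rw [fgen_two_of_le hk, fgen_two_of_le hk, fgen_two_of_le (ht.trans (Nat.cast_nonneg _))]

theorem rho_thompsonW_of_one_le (k : ℕ) {t : ℝ} (ht : 1 ≤ t) : ρ (thompsonW k) t = t := by
  apply rho_thompsonW_eq_of ρ hρmul hρgen
  simp only [rho_xgPrefix_of_one_le ρ hρmul hρgen _ ht]
  rw [fgen_two_of_ge (t := t + k) (by linarith), fgen_two_of_ge (t := t + k + 1) (by linarith),
    fgen_two_of_ge (by push_cast; linarith)]
  push_cast; ring

theorem rho_thompsonW_of_mem_Icc_left (k : ℕ) {s : ℝ}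
    (hs : 2 ^ k * (s - 1) ∈ Icc (-3 / 4) (-1 / 2)) :
    ρ (thompsonW k) s = s + 1 / 2 ^ (k + 2) := by
  apply rho_thompsonW_eq_of ρ hρmul hρgen
  set u := 2 ^ k * (s - 1) with hu
  have hscale : 2 ^ (k + 1) * (s + 1 / 2 ^ (k + 2) - 1) = 2 * u + 1 / 2 := by
    rw [hu]; field_simp; ring
  obtain ⟨hu₁, hu₂⟩ := hs
  rw [rho_xgPrefix_of_mem_Icc ρ hρmul hρgen k ⟨by linarith, by linarith⟩,
    rho_xgPrefix_of_mem_Icc ρ hρmul hρgen (k + 1) (by rw [hscale]; constructor <;> linarith),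
    hscale, fgen_two_of_mem_Icc (t := u + k + 1) ⟨by linarith, by linarith⟩,
    fgen_two_of_mem_Icc (t := 2 * (u + k + 1) - k) ⟨by linarith, by linarith⟩,
    fgen_two_of_mem_Icc ⟨by push_cast; linarith, by push_cast; linarith⟩]
  push_cast; ring

theorem rho_thompsonW_of_mem_Icc_right (k : ℕ) {s : ℝ}
    (hs : 2 ^ k * (s - 1) ∈ Icc (-1 / 2) (-1 / 4)) :
    ρ (thompsonW k) s = (s + 1) / 2 := by
  apply rho_thompsonW_eq_of ρ hρmul hρgen
  set u := 2 ^ k * (s - 1) with hu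
  have hscale : 2 ^ (k + 1) * ((s + 1) / 2 - 1) = u := by rw [hu, pow_succ]; ring
  obtain ⟨hu₁, hu₂⟩ := hs
  rw [rho_xgPrefix_of_mem_Icc ρ hρmul hρgen k ⟨by linarith, by linarith⟩,
    rho_xgPrefix_of_mem_Icc ρ hρmul hρgen (k + 1) (by rw [hscale]; constructor <;> linarith),
    hscale, fgen_two_of_mem_Icc (t := u + k + 1) ⟨by linarith, by linarith⟩,
    fgen_two_of_ge (t := 2 * (u + k + 1) - k) (by linarith),
    fgen_two_of_mem_Icc ⟨by push_cast; linarith, by push_cast; linarith⟩]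
  push_cast; ring

theorem not_isLocallyAffineAt_rho_thompsonW (k : ℕ) :
    ¬ IsLocallyAffineAt (ρ (thompsonW k)) (1 - 1 / 2 ^ (k + 1)) := by
  have h2k : (0 : ℝ) < 2 ^ k := by positivity
  have hη : (2 : ℝ) ^ k * (1 / 2 ^ (k + 2)) = 1 / 4 := by field_simp; ring
  have ht : (2 : ℝ) ^ k * (1 - 1 / 2 ^ (k + 1) - 1) = -1 / 2 := by field_simp; ring
  refine not_isLocallyAffineAt_of_slopes (η := 1 / 2 ^ (k + 2)) (a₁ := 1)
    (b₁ := 1 / 2 ^ (k + 2)) (a₂ := 1 / 2) (b₂ := 1 / 2) (by positivity) (by norm_num)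
    (fun s hs => ?_) (fun s hs => ?_)
  · rw [rho_thompsonW_of_mem_Icc_left ρ hρmul hρgen k
      ⟨by nlinarith [hs.1], by nlinarith [hs.2]⟩]
    ring
  · rw [rho_thompsonW_of_mem_Icc_right ρ hρmul hρgen k
      ⟨by nlinarith [hs.1], by nlinarith [hs.2]⟩]
    ring

end Action

theorem statement18_general (k : ℕ) (w : FP 2)
    (hw : w = (List.ofFn fun t : Fin k => xg 2 t).prod * xg 2 k ^ 2 * (xg 2 (k + 1))⁻¹ *
      ((List.ofFn fun t : Fin (k + 1) => xg 2 t).prod)⁻¹)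
    (ρ : FP 2 → ℝ → ℝ)
    (hρmul : ∀ a b : FP 2, ρ (a * b) = ρ b ∘ ρ a)
    (hρgen : ∀ j : ℕ, ρ (xg 2 j) = fgen 2 j) :
    (∀ t : ℝ, t ≤ 0 → ρ w t = t) ∧ (∀ t : ℝ, 1 ≤ t → ρ w t = t) ∧ k ≤ wlen 2 w := by
  obtain rfl : w = thompsonW k := hw
  refine ⟨fun t => rho_thompsonW_of_nonpos ρ hρmul hρgen k,
    fun t => rho_thompsonW_of_one_le ρ hρmul hρgen k, ?_⟩
  refine le_wordLength (by rw [closure_xg_eq_top le_rfl]; trivial) fun l hl hprod => ?_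
  by_contra! hlen
  apply not_isLocallyAffineAt_rho_thompsonW ρ hρmul hρgen k
  rw [← hprod]
  refine isLocallyAffineAt_rho_list_prod ρ hρmul hρgen l (fun g hg => ?_)
    fun h => one_sub_inv_two_pow_succ_notMem_dyadics k (dyadics_mono hlen.le h)
  rcases hl g hg with ⟨i, -, rfl⟩ | ⟨i, -, hi⟩
  · exact Or.inl ⟨i, rfl⟩
  · exact Or.inr ⟨i, hi.symm⟩

/-- The elements `w_k = x₀x₁⋯x_{k-1}·x_k²·x_{k+1}⁻¹x_k⁻¹⋯x₁⁻¹x₀⁻¹` of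
`F(2)` act on `ℝ` fixing every `t ≤ 0` and every `t ≥ 1` (all breakpoints lie in
`[0,1] × [0,1]`), yet their word length grows linearly: `|w_k|₂ ≥ k`. -/
theorem statement18 (k : ℕ) (hk : 1 ≤ k) (w : FP 2)
    (hw : w = (List.ofFn fun t : Fin k => xg 2 t).prod * xg 2 k ^ 2 * (xg 2 (k + 1))⁻¹ *
      ((List.ofFn fun t : Fin (k + 1) => xg 2 t).prod)⁻¹)
    (ρ : FP 2 → ℝ → ℝ)
    (hρmul : ∀ a b : FP 2, ρ (a * b) = ρ b ∘ ρ a)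
    (hρgen : ∀ j : ℕ, ρ (xg 2 j) = fgen 2 j) :
    (∀ t : ℝ, t ≤ 0 → ρ w t = t) ∧ (∀ t : ℝ, 1 ≤ t → ρ w t = t) ∧ k ≤ wlen 2 w :=
  statement18_general k w hw ρ hρmul hρgen
end
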